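/- arXiv:1504.04192 — 7 statements merged into one kernel-verified Lean document; each statement's English description precedes it below -/
import Mathlib

section
/- Let D be a non-principal ultrafilter on ω, s ∈ ω^{<ω}, and ⟨φ_k⟩_{k<ω} a sequence of slaloms each of width at most w such that (s,φ_k) is a condition of E for every k. Then the D-limit condition q = (s, lim_D ⟨φ_k⟩) is a condition of E (of width at most w), and q ≤ no p_k in general, but: for every finite extension t ⊇ s with (t, ψ) ≤ q in E and every k* < ω, there exists k > k* such that (t,ψ) is compatible with (s,φ_k). In particular, q forces in E that {k : (s,φ_k) ∈ G} is infinite. -/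
/-- A pair `(s, φ)` is a condition of the eventually different forcing `E` if `φ` is a
slalom of some finite width `w` (all values of size `≤ w`) and the stem `s` avoids `φ`. -/
def EPred (p : List ℕ × (ℕ → Set ℕ)) : Prop :=
  (∃ w : ℕ, ∀ i, (p.2 i).encard ≤ w) ∧ ∀ (i : ℕ) (h : i < p.1.length), p.1.get ⟨i, h⟩ ∉ p.2 i

/-- The eventually different forcing `E`. -/
def ECond := {p : List ℕ × (ℕ → Set ℕ) // EPred p}

/-- The order of `E`: `q ≤ p` iff the stem of `p` is an initial segment of the stem of `q`
and the slalom of `q` contains the slalom of `p` pointwise. -/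
def ECle (q p : ECond) : Prop :=
  p.val.1 <+: q.val.1 ∧ ∀ i, p.val.2 i ⊆ q.val.2 i

/-- The `D`-limit of a sequence of subsets of `ω`. -/
def limD (D : Ultrafilter ℕ) (A : ℕ → Set ℕ) : Set ℕ :=
  {n | {k | n ∈ A k} ∈ D}

/-!
Since `D` is an ultrafilter, a finite set lies in `lim_D ⟨φ_k⟩(n)` only if it lies in `D`-almost
every `φ_k(n)`, which bounds the width of the limit by `w`, and a point lies outside the limit
iff it lies outside `D`-almost every `φ_k(n)`. Hence a stem `t` extending `s` that avoids the
limit avoids `φ_k` for `D`-almost every `k`, in particular (as `D` is non-principal) for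
infinitely many `k`; for those `k` the slalom `ψ ∪ φ_k` with stem `t` is a common extension.
-/

section limD

variable (D : Ultrafilter ℕ) {A : ℕ → Set ℕ}

theorem eventually_subset_of_subset_limD {F : Set ℕ} (hF : F.Finite) (hsub : F ⊆ limD D A) :
    ∀ᶠ k in (D : Filter ℕ), F ⊆ A k :=
  (Filter.eventually_all_finite hF).2 hsub

theorem notMem_limD_iff {n : ℕ} : n ∉ limD D A ↔ ∀ᶠ k in (D : Filter ℕ), n ∉ A k :=
  Ultrafilter.eventually_not.symm

theorem encard_limD_le {w : ℕ} (hA : ∀ k, (A k).encard ≤ w) : (limD D A).encard ≤ w := by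
  by_contra! hlt
  obtain ⟨F, hF, hFcard⟩ := Set.exists_subset_encard_eq (Order.add_one_le_of_lt hlt)
  have hFfin : F.Finite := Set.finite_of_encard_eq_coe (k := w + 1) (by simpa using hFcard)
  obtain ⟨k, hk⟩ := (eventually_subset_of_subset_limD D hFfin hF).exists
  have hle : (w : ℕ∞) + 1 ≤ w := hFcard ▸ (Set.encard_mono hk).trans (hA k)
  exact (ENat.add_one_le_iff (ENat.natCast_ne_top w)).1 hle |>.false

theorem eventually_avoids_of_avoids_limD {φ : ℕ → ℕ → Set ℕ} {t : List ℕ}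
    (ht : ∀ (i : ℕ) (h : i < t.length), t.get ⟨i, h⟩ ∉ limD D (fun k => φ k i)) :
    ∀ᶠ k in (D : Filter ℕ), ∀ (i : ℕ) (h : i < t.length), t.get ⟨i, h⟩ ∉ φ k i := by
  have hall : ∀ᶠ k in (D : Filter ℕ), ∀ i : Fin t.length, t.get i ∉ φ k i :=
    Filter.eventually_all.2 fun i => (notMem_limD_iff D).1 (ht i i.2)
  exact hall.mono fun k hk i h => hk ⟨i, h⟩

end limD

theorem EPred.union {t : List ℕ} {ψ χ : ℕ → Set ℕ} (hψ : EPred (t, ψ)) (hχ : EPred (t, χ)) :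
    EPred (t, fun i => ψ i ∪ χ i) := by
  obtain ⟨⟨wψ, hwψ⟩, hψt⟩ := hψ
  obtain ⟨⟨wχ, hwχ⟩, hχt⟩ := hχ
  refine ⟨⟨wψ + wχ, fun i => ?_⟩, fun i h hmem => hmem.elim (hψt i h) (hχt i h)⟩
  calc (ψ i ∪ χ i).encard ≤ (ψ i).encard + (χ i).encard := Set.encard_union_le _ _
    _ ≤ wψ + wχ := add_le_add (hwψ i) (hwχ i)
    _ = ((wψ + wχ : ℕ) : ℕ∞) := by push_cast; rfl

theorem ECond.exists_common_extension (r p : ECond) (hstem : p.val.1 <+: r.val.1)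
    (havoid : EPred (r.val.1, p.val.2)) : ∃ r' : ECond, ECle r' r ∧ ECle r' p :=
  ⟨⟨_, r.2.union havoid⟩, ⟨List.prefix_refl _, fun _ => Set.subset_union_left⟩,
    ⟨hstem, fun _ => Set.subset_union_right⟩⟩

theorem epred_limD (D : Ultrafilter ℕ) {s : List ℕ} {w : ℕ} {φ : ℕ → ℕ → Set ℕ}
    (hwidth : ∀ k n, (φ k n).encard ≤ w) (hcond : ∀ k, EPred (s, φ k)) :
    EPred (s, fun n => limD D (fun k => φ k n)) :=
  ⟨⟨w, fun n => encard_limD_le D (hwidth · n)⟩, fun i h =>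
    (notMem_limD_iff D).2 (Filter.Eventually.of_forall fun k => (hcond k).2 i h)⟩

/-- Let `D` be a non-principal ultrafilter, `s` a stem and `⟨φ_k⟩` a sequence of slaloms of
width at most `w` with each `(s, φ_k)` a condition of `E`.  Then the `D`-limit
`q = (s, lim_D φ_k)` is a condition of `E` of width at most `w`, and every condition
extending `q` is compatible with infinitely many of the `(s, φ_k)`; in particular `q`
forces in `E` that `{k : (s, φ_k) ∈ G}` is infinite. -/
theorem stmt_3 (D : Ultrafilter ℕ) (hD : (D : Filter ℕ) ≤ Filter.cofinite)
    (s : List ℕ) (w : ℕ) (φ : ℕ → ℕ → Set ℕ)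
    (hwidth : ∀ k n, (φ k n).encard ≤ w)
    (hcond : ∀ k, EPred (s, φ k)) :
    ∃ hq : EPred (s, fun n => limD D (fun k => φ k n)),
      (∀ n, (limD D (fun k => φ k n)).encard ≤ w) ∧
      ∀ r : ECond, ECle r ⟨(s, fun n => limD D (fun k => φ k n)), hq⟩ →
        ∀ k₀ : ℕ, ∃ k > k₀, ∃ r' : ECond, ECle r' r ∧ ECle r' ⟨(s, φ k), hcond k⟩ := by
  refine ⟨epred_limD D hwidth hcond, fun n => encard_limD_le D (hwidth · n), ?_⟩
  rintro ⟨⟨t, ψ⟩, hr⟩ ⟨hstem, hψ⟩ k₀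
  have hgood : ∀ᶠ k in (D : Filter ℕ), EPred (t, φ k) :=
    (eventually_avoids_of_avoids_limD D fun i h hi => hr.2 i h (hψ i hi)).mono
      fun k hk => ⟨(hcond k).1, hk⟩
  have hlarge : ∀ᶠ k in (D : Filter ℕ), k₀ < k :=
    hD (Nat.cofinite_eq_atTop ▸ Filter.eventually_gt_atTop k₀)
  obtain ⟨k, hk, hk₀⟩ := (hgood.and hlarge).exists
  exact ⟨k, hk₀, ECond.exists_common_extension _ ⟨(s, φ k), hcond k⟩ hstem hk⟩
end

section
/- Let κ be an uncountable regular cardinal and B = {f_η : η < κ} ⊆ ω^ω a family such that for every K ⊆ κ of size κ, the subfamily {f_η : η ∈ K} is unbounded with respect to eventual domination ≤*. Then for every K ⊆ κ of size κ and every m* < ω, there exist m ≥ m* and a strictly increasing sequence ⟨η_k⟩_{k<ω} in K such that ⟨f_{η_k}(m)⟩_{k<ω} is strictly increasing. -/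
open Cardinal Filter

/-- Eventual domination on `ω^ω`. -/
def leStar (f g : ℕ → ℕ) : Prop := ∀ᶠ n in atTop, f n ≤ g n

/-!
Call a coordinate `m` good for `K` if for every `n` there are `κ` many `η ∈ K` with
`n < f η m`. If no `m ≥ m*` were good, choose for each such `m` a bound `g m` exceeded at `m`
by fewer than `κ` members of `K`. Since `κ` is regular and uncountable, these countably many
small sets leave `κ` many `η ∈ K`, all with `f η ≤* g`, contradicting unboundedness.
At a good coordinate, a set of size `κ` is unbounded in `κ.ord.ToType`, so above any `η`
there is some `η' ∈ K` with larger value at `m`, and the sequence is built greedily.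
-/

universe u

open Set Ordinal

namespace Cardinal

theorem mk_diff_eq_of_mk_lt {α : Type u} {S T : Set α} (hS : ℵ₀ ≤ #S) (hT : #T < #S) :
    #(S \ T : Set α) = #S := by
  refine (mk_le_mk_of_subset sdiff_subset).antisymm (not_lt.1 fun hlt ↦ ?_)
  exact (le_mk_sdiff_add_mk S T).not_gt (add_lt_of_lt hS hlt hT)

theorem mk_iUnion_nat_lt_of_isRegular {α : Type u} {κ : Cardinal.{u}} (hreg : κ.IsRegular)
    (hunc : ℵ₀ < κ) {t : ℕ → Set α} (ht : ∀ i, #(t i) < κ) : #(⋃ i, t i) < κ := by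
  have h := (card_iUnion_lt_iff_forall_of_isRegular (t := fun i : ULift.{u} ℕ ↦ t i.down) hreg
    (by simpa using hunc)).2 fun i ↦ ht i.down
  rwa [ULift.down_surjective.iUnion_comp] at h

theorem exists_gt_of_mk_eq {α : Type u} [LinearOrder α] [WellFoundedLT α]
    (hord : ord #α = typeLT α) (hα : ℵ₀ ≤ #α) {s : Set α} (hs : #s = #α) (x : α) :
    ∃ y ∈ s, x < y := by
  by_contra! h
  exact (mk_le_mk_of_subset fun y hy ↦ h y hy).not_gt (hs ▸ mk_Iic_lt x hord hα)

end Cardinal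

theorem exists_seq_strictMono_comp_strictMono {α β : Type*} [Preorder α] [Preorder β]
    {s : Set α} (hs : s.Nonempty) {h : α → β} (hstep : ∀ x ∈ s, ∃ y ∈ s, x < y ∧ h x < h y) :
    ∃ η : ℕ → α, (∀ k, η k ∈ s) ∧ StrictMono η ∧ StrictMono (h ∘ η) := by
  choose! next hnext_mem hnext_gt hnext_apply using hstep
  obtain ⟨x₀, hx₀⟩ := hs
  have hmem : ∀ k, next^[k] x₀ ∈ s := fun k ↦ by
    induction k with
    | zero => exact hx₀
    | succ k ih => rw [Function.iterate_succ_apply']; exact hnext_mem _ ih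
  refine ⟨fun k ↦ next^[k] x₀, hmem, strictMono_nat_of_lt_succ fun k ↦ ?_,
    strictMono_nat_of_lt_succ fun k ↦ ?_⟩
  · rw [Function.iterate_succ_apply']; exact hnext_gt _ (hmem k)
  · simp only [Function.comp_apply, Function.iterate_succ_apply']; exact hnext_apply _ (hmem k)

section Unbounded

variable {α : Type u} {κ : Cardinal.{u}} {f : α → ℕ → ℕ}

theorem exists_subset_mk_eq_leStar_of_forall_mk_lt (hreg : κ.IsRegular) (hunc : ℵ₀ < κ)
    {K : Set α} (hK : #K = κ) {m₀ : ℕ} (hsmall : ∀ m ≥ m₀, ∃ n, #{η ∈ K | n < f η m} < κ) :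
    ∃ K' ⊆ K, #K' = κ ∧ ∃ g : ℕ → ℕ, ∀ η ∈ K', leStar (f η) g := by
  choose! g hg using hsmall
  set U : Set α := ⋃ m, {η ∈ K | m₀ ≤ m ∧ g m < f η m}
  have hU : #U < κ := mk_iUnion_nat_lt_of_isRegular hreg hunc fun m ↦ by
    by_cases hm : m₀ ≤ m
    · exact (mk_le_mk_of_subset fun _ ↦ And.imp_right And.right).trans_lt (hg m hm)
    · simpa [hm] using hreg.pos
  refine ⟨K \ U, sdiff_subset, ?_, g, fun η hη ↦ eventually_atTop.2 ⟨m₀, fun m hm ↦ ?_⟩⟩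
  · rw [mk_diff_eq_of_mk_lt (hK ▸ hunc.le) (hK ▸ hU), hK]
  · by_contra! hgt
    exact hη.2 (mem_iUnion_of_mem m ⟨hη.1, hm, hgt⟩)

theorem exists_ge_forall_mk_lt_apply_eq (hreg : κ.IsRegular) (hunc : ℵ₀ < κ)
    (hB : ∀ K : Set α, #K = κ → ¬ ∃ g : ℕ → ℕ, ∀ η ∈ K, leStar (f η) g)
    {K : Set α} (hK : #K = κ) (m₀ : ℕ) :
    ∃ m ≥ m₀, ∀ n, #{η ∈ K | n < f η m} = κ := by
  by_contra! hlarge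
  obtain ⟨K', -, hK', hbdd⟩ := exists_subset_mk_eq_leStar_of_forall_mk_lt hreg hunc hK
    fun m hm ↦ (hlarge m hm).imp fun _ hn ↦
      hn.lt_of_le (hK ▸ mk_le_mk_of_subset fun _ hη ↦ hη.1)
  exact hB K' hK' hbdd

end Unbounded

/-- Let `κ` be an uncountable regular cardinal and `B = {f_η : η < κ} ⊆ ω^ω` a family all
of whose subfamilies of size `κ` are `≤*`-unbounded.  Then for every `K ⊆ κ` of size `κ`
and every `m* < ω` there are `m ≥ m*` and a strictly increasing sequence `⟨η_k⟩_{k<ω}` in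
`K` such that `⟨f_{η_k}(m)⟩_{k<ω}` is strictly increasing. -/
theorem stmt_6 (κ : Cardinal) (hreg : κ.IsRegular) (hunc : ℵ₀ < κ)
    (f : κ.ord.ToType → ℕ → ℕ)
    (hB : ∀ K : Set κ.ord.ToType, #K = κ →
      ¬ ∃ g : ℕ → ℕ, ∀ η ∈ K, leStar (f η) g) :
    ∀ K : Set κ.ord.ToType, #K = κ → ∀ m₀ : ℕ,
      ∃ m ≥ m₀, ∃ η : ℕ → κ.ord.ToType,
        (∀ k, η k ∈ K) ∧ StrictMono η ∧ StrictMono (fun k => f (η k) m) := by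
  intro K hK m₀
  obtain ⟨m, hm, htail⟩ := exists_ge_forall_mk_lt_apply_eq hreg hunc hB hK m₀
  have hκ : #κ.ord.ToType = κ := mk_ord_toType κ
  have hstep : ∀ x ∈ K, ∃ y ∈ K, x < y ∧ f x m < f y m := fun x _ ↦ by
    obtain ⟨y, ⟨hyK, hy⟩, hxy⟩ :=
      exists_gt_of_mk_eq (by simp) (hunc.le.trans_eq hκ.symm) ((htail (f x m)).trans hκ.symm) x
    exact ⟨y, hyK, hxy, hy⟩
  have hK₀ : K.Nonempty := by
    rw [← nonempty_coe_sort, ← mk_ne_zero_iff, hK]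
    exact hreg.pos.ne'
  obtain ⟨η, hηK, hη, hfη⟩ := exists_seq_strictMono_comp_strictMono hK₀ hstep
  exact ⟨m, hm, η, hηK, hη, hfη⟩
end

section
/- Engelking–Karłowicz theorem: Let θ be an uncountable regular cardinal and χ a cardinal with χ^{<θ} = χ. Let δ < (2^χ)^+ be an ordinal and ⟨A_α⟩_{α<δ} a sequence of sets each of size ≤ χ. Then there is a family {h_ε : ε < χ} of functions h_ε ∈ ∏_{α<δ} A_α such that every partial function x with domain a subset of δ of size < θ and x(α) ∈ A_α for all α ∈ dom(x) is extended by some h_ε (i.e., x ⊆ h_ε). -/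
/-! Embed the coordinates into `Set K` (there are at most `2 ^ #K` of them) and each fibre into
`K`. Any fewer than `θ` subsets of `K` are already told apart by their traces on some set `S ⊆ K`
of size `< θ`, one point for each pair. A small partial function `x` on such a family is therefore
recovered from `S` and the small partial function `T ∩ S ↦ x T` on traces, and since
`#K ^< θ = #K` there are only `#K` such codes. -/

open Cardinal Set Function

universe u v w

namespace Cardinal

variable {θ χ : Cardinal.{u}}

theorem exists_mk_Iio_eq {c : Cardinal.{u}} (hc : c < θ) : ∃ i : θ.ord.ToType, #(Iio i) = c := by
  refine ⟨Ordinal.ToType.mk ⟨c.ord, mem_Iio.2 (ord_lt_ord.2 hc)⟩, ?_⟩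
  change #{y // y < _} = c
  rw [← Ordinal.card_typein, ← Ordinal.ToType.mk_symm_apply_coe, RelIso.symm_apply_apply,
    card_ord]

theorem mk_bounded_set_lt_le (X : Type u) (θ : Cardinal.{u}) :
    #{S : Set X // #S < θ} ≤ θ * max #X ℵ₀ ^< θ := by
  have hcover : {S : Set X | #S < θ} ⊆ ⋃ i : θ.ord.ToType, {S | #S ≤ #(Iio i)} := fun S hS ↦
    let ⟨i, hi⟩ := exists_mk_Iio_eq hS
    mem_iUnion.2 ⟨i, hi.ge⟩
  calc #{S : Set X // #S < θ}
      ≤ #(⋃ i : θ.ord.ToType, {S : Set X | #S ≤ #(Iio i)}) := mk_le_mk_of_subset hcover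
    _ ≤ #θ.ord.ToType * ⨆ i : θ.ord.ToType, #{S : Set X | #S ≤ #(Iio i)} := mk_iUnion_le _
    _ ≤ θ * max #X ℵ₀ ^< θ := by
      rw [mk_ord_toType]
      gcongr
      exact ciSup_le' fun i ↦ (mk_bounded_set_le X _).trans
        (le_powerlt _ (by simpa using mk_Iio_lt i))

theorem mk_bounded_set_lt_le_of_powerlt_eq {X : Type u} (hθχ : θ ≤ χ) (hχ : ℵ₀ ≤ χ)
    (hχθ : χ ^< θ = χ) (hX : #X ≤ χ) : #{S : Set X // #S < θ} ≤ χ :=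
  calc #{S : Set X // #S < θ}
      ≤ θ * max #X ℵ₀ ^< θ := mk_bounded_set_lt_le X θ
    _ ≤ χ * χ ^< θ := by
      gcongr
      exact powerlt_le.2 fun c hc ↦ (power_le_power_right (max_le hX hχ)).trans (le_powerlt χ hc)
    _ = χ := by rw [hχθ, mul_eq_self hχ]

theorem le_of_powerlt_eq_self (h2 : 2 ≤ χ) (h : χ ^< θ = χ) : θ ≤ χ := by
  by_contra! hlt
  have : 2 ^ χ ≤ χ := calc
    2 ^ χ ≤ χ ^ χ := power_le_power_right h2
    _ ≤ χ := (le_powerlt χ hlt).trans_eq h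
  exact (cantor χ).not_ge this

theorem mk_sigma_le_of_le {ι : Type u} {β : ι → Type u} (hχ : ℵ₀ ≤ χ) (hι : #ι ≤ χ)
    (hβ : ∀ i, #(β i) ≤ χ) : #(Σ i, β i) ≤ χ :=
  calc #(Σ i, β i) ≤ sum fun _ : ι ↦ χ := (mk_sigma β).trans_le (sum_le_sum _ _ hβ)
    _ = #ι * χ := sum_const' ι χ
    _ ≤ χ * χ := by gcongr
    _ = χ := mul_eq_self hχ

end Cardinal

def ExtendsSmallPartials {I : Type u} {A : I → Type v} {J : Type w} (θ : Cardinal.{u})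
    (h : J → ∀ i, A i) : Prop :=
  ∀ E : Set I, #E < θ → ∀ x : ∀ i : E, A i, ∃ j, ∀ i : E, h j i = x i

namespace ExtendsSmallPartials

variable {I : Type u} {J : Type w} {θ : Cardinal.{u}}

theorem of_subsingleton {A : I → Type v} [Nonempty J] [∀ i, Subsingleton (A i)]
    (h : J → ∀ i, A i) : ExtendsSmallPartials θ h :=
  fun _ _ _ ↦ ⟨Classical.arbitrary J, fun _ ↦ Subsingleton.elim _ _⟩

theorem comp_injective {I' : Type u} {Y : Type v} {h : J → I' → Y}
    (hh : ExtendsSmallPartials θ h) {f : I → I'} (hf : Injective f) :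
    ExtendsSmallPartials θ fun j ↦ h j ∘ f := by
  intro E hE x
  let e : E ≃ f '' E := Equiv.Set.image f E hf
  obtain ⟨j, hj⟩ := hh (f '' E) (mk_image_le.trans_lt hE) (x ∘ e.symm)
  exact ⟨j, fun i ↦ (hj (e i)).trans (congrArg x (e.symm_apply_apply i))⟩

theorem invFun_comp {A B : I → Type v} [∀ i, Nonempty (A i)] {h : J → ∀ i, B i}
    (hh : ExtendsSmallPartials θ h) {e : ∀ i, A i → B i} (he : ∀ i, Injective (e i)) :
    ExtendsSmallPartials θ fun j i ↦ invFun (e i) (h j i) := by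
  intro E hE x
  obtain ⟨j, hj⟩ := hh E hE fun i ↦ e i (x i)
  exact ⟨j, fun i ↦ (congrArg _ (hj i)).trans (leftInverse_invFun (he i) _)⟩

theorem exists_reindex {A : I → Type v} {J' : Type w} {h : J → ∀ i, A i}
    (hh : ExtendsSmallPartials θ h) (hθ : θ ≠ 0) (hJ : #J ≤ #J') :
    ∃ h' : J' → ∀ i, A i, ExtendsSmallPartials θ h' := by
  obtain ⟨j₀, -⟩ := hh ∅ (by simpa [pos_iff_ne_zero] using hθ) fun i ↦ (notMem_empty _ i.2).elim
  have : Nonempty J := ⟨j₀⟩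
  obtain ⟨f⟩ := hJ
  exact ⟨h ∘ invFun f, fun E hE x ↦
    let ⟨j, hj⟩ := hh E hE x
    ⟨f j, by simpa [leftInverse_invFun f.injective j] using hj⟩⟩

end ExtendsSmallPartials

namespace EngelkingKarlowicz

variable {K Y : Type u} {θ χ : Cardinal.{u}}

def Code (θ : Cardinal.{u}) (K Y : Type u) : Type u :=
  Σ S : {S : Set K // #S < θ}, Σ D : {D : Set (Set S.1) // #D < θ}, D.1 → Y

open scoped Classical in
noncomputable def Code.decode [Nonempty Y] (c : Code θ K Y) (T : Set K) : Y :=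
  if hT : ((↑) : c.1.1 → K) ⁻¹' T ∈ c.2.1.1 then c.2.2 ⟨_, hT⟩ else Classical.arbitrary Y

theorem mk_code_le (hθ : ℵ₀ ≤ θ) (hθχ : θ ≤ χ) (hχθ : χ ^< θ = χ) (hK : #K ≤ χ)
    (hY : #Y ≤ χ) : #(Code θ K Y) ≤ χ := by
  have hχ : ℵ₀ ≤ χ := hθ.trans hθχ
  have hpow {c : Cardinal} (hc : c < θ) : χ ^ c ≤ χ := (le_powerlt χ hc).trans_eq hχθ
  refine mk_sigma_le_of_le hχ (mk_bounded_set_lt_le_of_powerlt_eq hθχ hχ hχθ hK) fun S ↦ ?_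
  have hSets : #(Set S.1) ≤ χ := by
    rw [mk_set]
    exact (power_le_power_right (ofNat_le_aleph0.trans hχ)).trans (hpow S.2)
  refine mk_sigma_le_of_le hχ (mk_bounded_set_lt_le_of_powerlt_eq hθχ hχ hχθ hSets) fun D ↦ ?_
  rw [← power_def]
  exact (power_le_power_right hY).trans (hpow D.2)

theorem exists_injOn_preimage_val {E : Set (Set K)} (hθ : ℵ₀ ≤ θ) (hE : #E < θ) :
    ∃ S : Set K, #S < θ ∧ InjOn (fun T ↦ ((↑) : S → K) ⁻¹' T) E := by
  have hsep (p : {p : E × E // p.1 ≠ p.2}) : ∃ k, ¬(k ∈ p.1.1.1 ↔ k ∈ p.1.2.1) := by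
    by_contra! hp
    exact p.2 (Subtype.ext (Set.ext hp))
  choose sep hsep using hsep
  refine ⟨range sep, ?_, fun T hT T' hT' hTT' ↦ ?_⟩
  · calc #(range sep) ≤ #{p : E × E // p.1 ≠ p.2} := mk_range_le
      _ ≤ #(E × E) := mk_subtype_le _
      _ < θ := by rw [mk_prod, lift_id]; exact mul_lt_of_lt hθ hE hE
  · by_contra hne
    let p : {p : E × E // p.1 ≠ p.2} :=
      ⟨(⟨T, hT⟩, ⟨T', hT'⟩), fun h ↦ hne (congrArg Subtype.val h)⟩
    exact hsep p (Set.ext_iff.1 hTT' ⟨sep p, mem_range_self p⟩)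

theorem extendsSmallPartials_decode [Nonempty Y] (hθ : ℵ₀ ≤ θ) :
    ExtendsSmallPartials θ (Code.decode : Code θ K Y → Set K → Y) := by
  intro E hE x
  obtain ⟨S, hS, hinj⟩ := exists_injOn_preimage_val hθ hE
  let t : E → Set S := fun T ↦ (↑) ⁻¹' T.1
  have ht : Injective t := hinj.injective
  let c : Code θ K Y :=
    ⟨⟨S, hS⟩, ⟨range t, mk_range_le.trans_lt hE⟩, x ∘ (Equiv.ofInjective t ht).symm⟩
  refine ⟨c, fun T ↦ ?_⟩
  simp only [Code.decode, c]
  rw [dif_pos (mem_range_self T)]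
  exact congrArg x (Equiv.ofInjective_symm_apply ht T)

end EngelkingKarlowicz

open EngelkingKarlowicz in
theorem exists_extendsSmallPartials {θ : Cardinal.{u}} {I K : Type u} {A : I → Type u}
    [∀ i, Nonempty (A i)] (hθ : ℵ₀ ≤ θ) (hθK : θ ≤ #K) (hKθ : #K ^< θ = #K)
    (hI : #I ≤ 2 ^ #K) (hA : ∀ i, #(A i) ≤ #K) :
    ∃ h : K → ∀ i, A i, ExtendsSmallPartials θ h := by
  have : Nonempty K := mk_ne_zero_iff.1 (aleph0_pos.trans_le (hθ.trans hθK)).ne'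
  obtain ⟨u⟩ : Nonempty (I ↪ Set K) := by rwa [← le_def, mk_set]
  have e (i : I) : A i ↪ K := ((le_def _ _).1 (hA i)).some
  have hdense := ((extendsSmallPartials_decode (K := K) (Y := K) hθ).comp_injective
    u.injective).invFun_comp fun i ↦ (e i).injective
  exact hdense.exists_reindex (aleph0_pos.trans_le hθ).ne' (mk_code_le hθ hθK hKθ le_rfl le_rfl)

theorem stmt_7_general (θ χ : Cardinal) (hθunc : ℵ₀ < θ)
    (hχ : χ ^< θ = χ) (δ : Ordinal) (hδ : δ < (Order.succ ((2 : Cardinal) ^ χ)).ord)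
    (A : δ.ToType → Type) (hA : ∀ α, #(A α) ≤ χ) (hne : ∀ α, Nonempty (A α)) :
    ∃ h : χ.ord.ToType → (∀ α, A α),
      ∀ E : Set δ.ToType, #E < θ →
        ∀ x : ∀ α : E, A α, ∃ ε, ∀ α : E, h ε α = x α := by
  rcases lt_or_ge χ 2 with hχ2 | hχ2
  · have : Nonempty χ.ord.ToType := by
      rw [← mk_ne_zero_iff, mk_ord_toType]
      rintro rfl
      simp [zero_powerlt (aleph0_pos.trans hθunc).ne'] at hχ
    have hχ1 : χ ≤ 1 := by
      rwa [← Order.lt_succ_iff, ← Nat.cast_one, succ_natCast, Nat.cast_one, one_add_one_eq_two]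
    have (α : δ.ToType) : Subsingleton (A α) := le_one_iff_subsingleton.1 ((hA α).trans hχ1)
    have hconst : ExtendsSmallPartials θ fun (_ : χ.ord.ToType) α ↦ (hne α).some :=
      .of_subsingleton _
    exact ⟨fun _ α ↦ (hne α).some, hconst⟩
  · have hδ' : #δ.ToType ≤ 2 ^ χ := by
      rw [mk_toType]
      exact Order.lt_succ_iff.1 (lt_ord.1 hδ)
    rw [← mk_ord_toType χ] at hχ hA hδ' hχ2
    exact exists_extendsSmallPartials hθunc.le (le_of_powerlt_eq_self hχ2 hχ) hχ hδ' hA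

/-- Engelking–Karłowicz: if `θ` is uncountable regular, `χ^{<θ} = χ`, `δ < (2^χ)⁺` and
`⟨A_α⟩_{α<δ}` is a sequence of nonempty sets of size `≤ χ`, then there are `χ` many total
choice functions `⟨h_ε⟩_{ε<χ}` such that every partial choice function with domain of size
`< θ` is extended by some `h_ε`. -/
theorem stmt_7 (θ χ : Cardinal) (hθreg : θ.IsRegular) (hθunc : ℵ₀ < θ)
    (hχ : χ ^< θ = χ) (δ : Ordinal) (hδ : δ < (Order.succ ((2 : Cardinal) ^ χ)).ord)
    (A : δ.ToType → Type) (hA : ∀ α, #(A α) ≤ χ) (hne : ∀ α, Nonempty (A α)) :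
    ∃ h : χ.ord.ToType → (∀ α, A α),
      ∀ E : Set δ.ToType, #E < θ →
        ∀ x : ∀ α : E, A α, ∃ ε, ∀ α : E, h ε α = x α :=
  stmt_7_general θ χ hθunc hχ δ hδ A hA hne
end

section
/- Every forcing poset of size < θ is θ-⊏-good: for every P-name ḣ of a real in ω^ω there is a nonempty set Y ⊆ ω^ω in the ground model of size < θ such that for every f ∈ ω^ω that is ⊏-unbounded over Y, P forces f ⊄ ḣ. -/
/-!
Below each condition `p` build a fusion sequence `p ≥ c 0 ≥ c 1 ≥ ⋯` in which `c k` decides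
the `k`-th value of the name, and let `g_p` be the real so decided. The set `Y` of these `g_p`
(plus one real, in case `P` is empty) has size `< θ`. If some `f` unbounded over `Y` had a
condition `p` and an `n` such that every `q ≤ p` admits a real consistent with `q` that is
`⊏_n`-above `f`, then the witnesses for `c k` converge to `g_p`, so `f ⊏_n g_p` by closedness
of `⊏_n`, contradicting unboundedness.
-/

open Cardinal

/-- `decide` is an abstract (name for a) real of the forcing poset `P`: `decide p n m`
means that the condition `p` forces the `n`-th value of the name to be `m`.  The decided
values persist to stronger conditions, are unique, and densely many conditions decide each
value. -/
def IsNameForReal (P : Type) [Preorder P] (decide : P → ℕ → ℕ → Prop) : Prop :=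
  (∀ p q : P, ∀ n m, q ≤ p → decide p n m → decide q n m) ∧
  (∀ p n m m', decide p n m → decide p n m' → m = m') ∧
  (∀ p n, ∃ q ≤ p, ∃ m, decide q n m)

namespace IsNameForReal

variable {P : Type} [Preorder P] {decide : P → ℕ → ℕ → Prop}

theorem exists_fusion_sequence (hname : IsNameForReal P decide) (p : P) :
    ∃ (c : ℕ → P) (g : ℕ → ℕ), Antitone c ∧ (∀ k, c k ≤ p) ∧ ∀ k, decide (c k) k (g k) := by
  choose next next_le next_decides using hname.2.2
  let c : ℕ → P := fun k => Nat.rec (next p 0) (fun j q => next q (j + 1)) k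
  have c_decides : ∀ k, ∃ m, decide (c k) k m
    | 0 => next_decides p 0
    | j + 1 => next_decides (c j) (j + 1)
  choose g hg using c_decides
  have hc : Antitone c := antitone_nat_of_succ_le fun k => next_le (c k) (k + 1)
  exact ⟨c, g, hc, fun k => (hc k.zero_le).trans (next_le p 0), hg⟩

variable {c : ℕ → P} {g : ℕ → ℕ}

theorem tendsto_of_consistent (hname : IsNameForReal P decide) (hc : Antitone c)
    (hg : ∀ k, decide (c k) k (g k)) {G : ℕ → ℕ → ℕ}
    (hG : ∀ k, ∀ n m, decide (c k) n m → G k n = m) :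
    Filter.Tendsto G Filter.atTop (nhds g) := by
  rw [tendsto_pi_nhds]
  intro j
  refine tendsto_const_nhds.congr' ?_
  filter_upwards [Filter.eventually_ge_atTop j] with k hk
  exact (hG k j (g j) (hname.1 _ _ j (g j) (hc hk) (hg j))).symm

theorem mem_of_isClosed_of_consistent (hname : IsNameForReal P decide) (hc : Antitone c)
    (hg : ∀ k, decide (c k) k (g k)) {C : Set (ℕ → ℕ)} (hC : IsClosed C)
    (hcons : ∀ k, ∃ G ∈ C, ∀ n m, decide (c k) n m → G n = m) : g ∈ C := by
  choose G hGC hG using hcons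
  exact hC.mem_of_tendsto (hname.tendsto_of_consistent hc hg hG) (.of_forall hGC)

end IsNameForReal

theorem Cardinal.mk_insert_range_lt {α β : Type} {θ : Cardinal} (hθ : ℵ₀ < θ) (hα : #α < θ)
    (f : α → β) (b : β) : #(insert b (Set.range f) : Set β) < θ :=
  mk_insert_le.trans_lt <|
    add_lt_of_lt hθ.le (mk_range_le.trans_lt hα) (one_lt_aleph0.trans hθ)

theorem stmt_9_general (θ : Cardinal) (hθunc : ℵ₀ < θ)
    (R : ℕ → (ℕ → ℕ) → (ℕ → ℕ) → Prop)
    (hRclosed : ∀ n, IsClosed {x : (ℕ → ℕ) × (ℕ → ℕ) | R n x.1 x.2})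
    (P : Type) [Preorder P] (hP : #P < θ)
    (decide : P → ℕ → ℕ → Prop) (hname : IsNameForReal P decide) :
    ∃ Y : Set (ℕ → ℕ), Y.Nonempty ∧ #Y < θ ∧
      ∀ f : ℕ → ℕ, (∀ g ∈ Y, ¬ ∃ n, R n f g) →
        ∀ p : P, ∀ n : ℕ, ∃ q ≤ p,
          ∀ g : ℕ → ℕ, (∀ n' m, decide q n' m → g n' = m) → ¬ R n f g := by
  choose c g hc hcp hg using hname.exists_fusion_sequence
  refine ⟨insert (fun _ => 0) (Set.range g), Set.insert_nonempty _ _,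
    mk_insert_range_lt hθunc hP g _, fun f hf p n => ?_⟩
  by_contra! hcons
  have hsection : IsClosed {h : ℕ → ℕ | R n f h} :=
    (hRclosed n).preimage (continuous_const.prodMk continuous_id)
  have hfg : R n f (g p) := hname.mem_of_isClosed_of_consistent (hc p) (hg p) hsection
    fun k => (hcons (c p k) (hcp p k)).imp fun _ h => ⟨h.2, h.1⟩
  exact hf (g p) (Set.mem_insert_of_mem _ ⟨p, rfl⟩) ⟨n, hfg⟩

/-- Every forcing poset of size `< θ` is `θ`-`⊏`-good, where `⊏ = ⋃_n ⊏_n` for an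
increasing sequence `⟨⊏_n⟩` of closed relations on `ω^ω` with nowhere dense vertical
sections: for every name `ḣ` of a real there is a nonempty `Y ⊆ ω^ω` of size `< θ` such
that for every `f` which is `⊏`-unbounded over `Y`, `P` forces `¬ f ⊏ ḣ` (densely many
conditions exclude `f ⊏_n ḣ` for each `n`, in the sense that every real consistent with
the information decided by such a condition fails `f ⊏_n ·`). -/
theorem stmt_9 (θ : Cardinal) (hθreg : θ.IsRegular) (hθunc : ℵ₀ < θ)
    (R : ℕ → (ℕ → ℕ) → (ℕ → ℕ) → Prop)
    (hRmono : ∀ n n', n ≤ n' → ∀ f g, R n f g → R n' f g)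
    (hRclosed : ∀ n, IsClosed {x : (ℕ → ℕ) × (ℕ → ℕ) | R n x.1 x.2})
    (hRnwd : ∀ n g, IsNowhereDense {f : ℕ → ℕ | R n f g})
    (P : Type) [Preorder P] (hP : #P < θ)
    (decide : P → ℕ → ℕ → Prop) (hname : IsNameForReal P decide) :
    ∃ Y : Set (ℕ → ℕ), Y.Nonempty ∧ #Y < θ ∧
      ∀ f : ℕ → ℕ, (∀ g ∈ Y, ¬ ∃ n, R n f g) →
        ∀ p : P, ∀ n : ℕ, ∃ q ≤ p,
          ∀ g : ℕ → ℕ, (∀ n' m, decide q n' m → g n' = m) → ¬ R n f g :=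
  stmt_9_general θ hθunc R hRclosed P hP decide hname
end

section
/- cov(N) ≤ b_⋔ and d_⋔ ≤ non(N), where ⋔ is the relation on 2^ω defined by f ⋔ g iff f↾I_k ≠ g↾I_k for all but finitely many k, with |I_k| = 2^{k+1}. -/
open Filter MeasureTheory Cardinal

/-- The interval partition `⟨I_k⟩` of `ω` with `|I_k| = 2^{k+1}`:
`I_k = [2^{k+1} - 2, 2^{k+2} - 2)`. -/
def Ipart (k : ℕ) : Set ℕ := Set.Ico (2 ^ (k + 1) - 2) (2 ^ (k + 2) - 2)

/-- `f ⋔ g` iff `f↾I_k ≠ g↾I_k` for all but finitely many `k`. -/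
def pitchfork (f g : ℕ → Bool) : Prop :=
  ∀ᶠ k in atTop, ∃ i ∈ Ipart k, f i ≠ g i

/-- `cov(N)`: the least number of `μ`-null sets covering `2^ω`. -/
noncomputable def covNull (μ : Measure (ℕ → Bool)) : Cardinal :=
  sInf {c | ∃ S : Set (Set (ℕ → Bool)), (∀ A ∈ S, μ A = 0) ∧
    ⋃₀ S = Set.univ ∧ #S = c}

/-- `non(N)`: the least size of a non-`μ`-null subset of `2^ω`. -/
noncomputable def nonNull (μ : Measure (ℕ → Bool)) : Cardinal :=
  sInf {c | ∃ A : Set (ℕ → Bool), μ A ≠ 0 ∧ #A = c}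

/-- `b_⋔`: the least size of a `⋔`-unbounded family. -/
noncomputable def bPitchfork : Cardinal :=
  sInf {c | ∃ F : Set (ℕ → Bool), (¬ ∃ g, ∀ f ∈ F, pitchfork f g) ∧ #F = c}

/-- `d_⋔`: the least size of a `⋔`-dominating family. -/
noncomputable def dPitchfork : Cardinal :=
  sInf {c | ∃ C : Set (ℕ → Bool), (∀ f, ∃ g ∈ C, pitchfork f g) ∧ #C = c}

/-!
For a fixed `f`, a random `g` agrees with `f` on `I_k` with probability `2^{-2^{k+1}}`, which is
summable in `k`, so by Borel–Cantelli almost every `g` satisfies `f ⋔ g`. Hence an unbounded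
family `F` yields the cover `{g | ¬ f ⋔ g}`, `f ∈ F`, of `2^ω` by null sets, and a non-null set
`A` is dominating, since otherwise it would lie inside the null set `{g | ¬ f ⋔ g}` for some `f`.
-/

def IpartFinset (k : ℕ) : Finset ℕ := Finset.Ico (2 ^ (k + 1) - 2) (2 ^ (k + 2) - 2)

lemma coe_IpartFinset (k : ℕ) : (IpartFinset k : Set ℕ) = Ipart k := by
  simp [IpartFinset, Ipart]

lemma card_IpartFinset (k : ℕ) : (IpartFinset k).card = 2 ^ (k + 1) := by
  have h2 : 2 ≤ 2 ^ (k + 1) := Nat.one_lt_two_pow (Nat.succ_ne_zero k)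
  rw [IpartFinset, Nat.card_Ico, pow_succ 2 (k + 1)]
  omega

lemma not_pitchfork_self (f : ℕ → Bool) : ¬ pitchfork f f := fun h => by
  obtain ⟨_, _, _, hne⟩ := h.exists
  exact hne rfl

lemma setOf_not_pitchfork_subset_limsup (f : ℕ → Bool) :
    {g | ¬ pitchfork f g} ⊆
      limsup (fun k => {g : ℕ → Bool | ∀ i ∈ IpartFinset k, g i = f i}) atTop := by
  intro g (hg : ¬ pitchfork f g)
  rw [mem_limsup_iff_frequently_mem]
  rw [pitchfork, not_eventually] at hg
  refine hg.mono fun k hk i hi => ?_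
  by_contra hne
  exact hk ⟨i, coe_IpartFinset k ▸ hi, Ne.symm hne⟩

lemma tsum_inv_two_pow_two_pow_ne_top : ∑' k : ℕ, (2 : ENNReal)⁻¹ ^ 2 ^ (k + 1) ≠ ⊤ := by
  have hle (k : ℕ) : (2 : ENNReal)⁻¹ ^ 2 ^ (k + 1) ≤ 2⁻¹ ^ k :=
    pow_le_pow_of_le_one (by positivity) (by simp)
      ((Nat.lt_two_pow_self.trans (Nat.pow_lt_pow_succ one_lt_two)).le)
  refine ne_top_of_le_ne_top ?_ (ENNReal.tsum_le_tsum hle)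
  simp [ENNReal.tsum_geometric]

section CoinMeasure

variable {μ : Measure (ℕ → Bool)}
  (hμ : ∀ (s : Finset ℕ) (b : ℕ → Bool),
    μ {f | ∀ i ∈ s, f i = b i} = (2 : ENNReal)⁻¹ ^ s.card)
include hμ

lemma measure_univ_eq_one_of_cylinder : μ Set.univ = 1 := by
  simpa using hμ ∅ fun _ => true

lemma measure_setOf_not_pitchfork (f : ℕ → Bool) : μ {g | ¬ pitchfork f g} = 0 := by
  refine measure_mono_null (setOf_not_pitchfork_subset_limsup f)
    (measure_limsup_atTop_eq_zero ?_)
  simpa only [hμ, card_IpartFinset] using tsum_inv_two_pow_two_pow_ne_top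

lemma covNull_le_card_of_unbounded {F : Set (ℕ → Bool)}
    (hF : ¬ ∃ g, ∀ f ∈ F, pitchfork f g) : covNull μ ≤ #F := by
  push Not at hF
  calc covNull μ ≤ #((fun f => {g | ¬ pitchfork f g}) '' F) := by
        refine csInf_le' ⟨_, ?_, ?_, rfl⟩
        · rintro _ ⟨f, -, rfl⟩
          exact measure_setOf_not_pitchfork hμ f
        · refine Set.eq_univ_of_forall fun g => ?_
          obtain ⟨f, hfF, hfg⟩ := hF g
          exact ⟨_, ⟨f, hfF, rfl⟩, hfg⟩
    _ ≤ #F := mk_image_le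

lemma dPitchfork_le_card_of_measure_ne_zero {A : Set (ℕ → Bool)} (hA : μ A ≠ 0) :
    dPitchfork ≤ #A := by
  refine csInf_le' ⟨A, fun f => ?_, rfl⟩
  by_contra! h
  exact hA (measure_mono_null h (measure_setOf_not_pitchfork hμ f))

end CoinMeasure

theorem stmt_11_general (μ : Measure (ℕ → Bool))
    (hμ : ∀ (s : Finset ℕ) (b : ℕ → Bool),
      μ {f | ∀ i ∈ s, f i = b i} = (2 : ENNReal)⁻¹ ^ s.card) :
    covNull μ ≤ bPitchfork ∧ dPitchfork ≤ nonNull μ := by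
  constructor
  · refine le_csInf ⟨_, Set.univ, fun ⟨g, hg⟩ => not_pitchfork_self g (hg g trivial), rfl⟩ ?_
    rintro _ ⟨F, hF, rfl⟩
    exact covNull_le_card_of_unbounded hμ hF
  · have huniv : μ Set.univ ≠ 0 := by simp [measure_univ_eq_one_of_cylinder hμ]
    refine le_csInf ⟨_, Set.univ, huniv, rfl⟩ ?_
    rintro _ ⟨A, hA, rfl⟩
    exact dPitchfork_le_card_of_measure_ne_zero hμ hA

/-- `cov(N) ≤ b_⋔` and `d_⋔ ≤ non(N)`, for the fair-coin product measure on `2^ω`. -/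
theorem stmt_11 (μ : Measure (ℕ → Bool)) [IsProbabilityMeasure μ]
    (hμ : ∀ (s : Finset ℕ) (b : ℕ → Bool),
      μ {f | ∀ i ∈ s, f i = b i} = (2 : ENNReal)⁻¹ ^ s.card) :
    covNull μ ≤ bPitchfork ∧ dPitchfork ≤ nonNull μ :=
  stmt_11_general μ hμ
end

section
/- add(M) = min(b, cov(M)), where b is the unbounding number, cov(M) the covering number of the meager ideal, and add(M) the additivity of the meager ideal. -/
open Filter Cardinal

/-- `add(M)`: the least size of a family of meager subsets of Baire space `ω^ω` whose
union is not meager. -/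
noncomputable def addMeager : Cardinal :=
  sInf {c | ∃ S : Set (Set (ℕ → ℕ)), (∀ A ∈ S, IsMeagre A) ∧
    ¬ IsMeagre (⋃₀ S) ∧ #S = c}

/-- `cov(M)`: the least number of meager sets covering Baire space. -/
noncomputable def covMeager : Cardinal :=
  sInf {c | ∃ S : Set (Set (ℕ → ℕ)), (∀ A ∈ S, IsMeagre A) ∧
    ⋃₀ S = Set.univ ∧ #S = c}

/-- `b`: the least size of a `≤*`-unbounded family in `ω^ω`. -/
noncomputable def bNumber : Cardinal :=
  sInf {c | ∃ F : Set (ℕ → ℕ),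
    (¬ ∃ g : ℕ → ℕ, ∀ f ∈ F, ∀ᶠ n in atTop, f n ≤ g n) ∧ #F = c}

/-!
A set `A ⊆ ω^ω` is meagre iff some strict extension function `Φ` on finite stems has the property
that every `g` extending `Φ s` for stems `s` of unbounded length avoids `A`.

`add(M) ≤ b`: for `f` in an unbounded family `F`, the functions that for all large `n` are nonzero
somewhere in `[n, n + max_{i ≤ n} f i]` form a meagre set `M_f`. If `⋃_{f ∈ F} M_f` had an
extension function `Φ`, then alternating blocks of `1`s with applications of `Φ` would build a
point of `M_f` through `Φ`, unless some stem `u` makes `|Φ (u ++ 1^(m - |u|))|` exceed `f m` for all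
`m > |u|`; these countably many functions would then bound `F`.

`min(b, cov(M)) ≤ add(M)`: extension functions are coded by parameters `w ∈ ω^ω`. Given fewer than
`cov(M)` extension functions `Φ_A`, one `w` has the property that from every stem the iterates of
the coded extension eventually make a `Φ_A`-step, for every `A`; given fewer than `b`, the number of
iterations needed is bounded by one function `R`, and iterating `R s + 1` times is an extension
function that works for all the `A` at once.
-/

namespace MillerTruss

open Set Topology

/-! ### Cylinders of Baire space -/

def cyl (s : List ℕ) : Set (ℕ → ℕ) := {g | ∀ i (hi : i < s.length), g i = s[i]}

def init (g : ℕ → ℕ) (n : ℕ) : List ℕ := List.ofFn fun i : Fin n => g i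

@[simp] lemma length_init (g : ℕ → ℕ) (n : ℕ) : (init g n).length = n := by simp [init]

@[simp] lemma getElem_init (g : ℕ → ℕ) (n i : ℕ) (hi : i < (init g n).length) :
    (init g n)[i] = g i := by simp [init]

lemma cyl_anti {s t : List ℕ} (h : s <+: t) : cyl t ⊆ cyl s := fun g hg i hi => by
  rw [hg i (hi.trans_le h.length_le), h.getElem]

lemma isOpen_cyl (s : List ℕ) : IsOpen (cyl s) := by
  have : cyl s = ⋂ i : Fin s.length, (fun g : ℕ → ℕ => g i) ⁻¹' {s[(i : ℕ)]} := by
    ext g; simp [cyl, Fin.forall_iff]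
  rw [this]
  exact isOpen_iInter_of_finite fun i =>
    (continuous_apply _).isOpen_preimage _ (isOpen_discrete _)

lemma cyl_nonempty (s : List ℕ) : (cyl s).Nonempty :=
  ⟨fun i => s.getD i 0, fun _ hi => List.getD_eq_getElem _ _ hi⟩

lemma cyl_init (g : ℕ → ℕ) (n : ℕ) : cyl (init g n) = PiNat.cylinder g n := by
  ext y; simp [cyl, PiNat.mem_cylinder_iff]

lemma init_prefix_init (g : ℕ → ℕ) {m n : ℕ} (h : m ≤ n) : init g m <+: init g n := by
  rw [List.prefix_iff_eq_take]
  exact List.ext_getElem (by simp; omega) fun i _ _ => by simp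

lemma init_length_of_mem_cyl {g : ℕ → ℕ} {s : List ℕ} (hg : g ∈ cyl s) : init g s.length = s :=
  List.ext_getElem (by simp) fun i _ hi => by simp [hg i hi]

lemma exists_cyl_init_subset {U : Set (ℕ → ℕ)} {g : ℕ → ℕ} (hU : IsOpen U) (hg : g ∈ U) :
    ∃ n, cyl (init g n) ⊆ U := by
  obtain ⟨_, ⟨x, n, rfl⟩, hgx, hsub⟩ :=
    (PiNat.isTopologicalBasis_cylinders (E := fun _ => ℕ)).exists_subset_of_mem_open hg hU
  exact ⟨n, by rwa [cyl_init, PiNat.mem_cylinder_iff_eq.1 hgx]⟩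

lemma dense_of_forall_cyl_inter_nonempty {U : Set (ℕ → ℕ)} (h : ∀ s, (cyl s ∩ U).Nonempty) :
    Dense U := by
  refine dense_iff_inter_open.2 fun V hV ⟨g, hg⟩ => ?_
  obtain ⟨n, hn⟩ := exists_cyl_init_subset hV hg
  obtain ⟨y, hyn, hyU⟩ := h (init g n)
  exact ⟨y, hn hyn, hyU⟩

lemma exists_cyl_subset_of_isOpen_of_dense {U : Set (ℕ → ℕ)} (hU : IsOpen U) (hd : Dense U)
    (s : List ℕ) : ∃ t, s <+: t ∧ s.length < t.length ∧ cyl t ⊆ U := by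
  obtain ⟨g, hgs, hgU⟩ := hd.inter_open_nonempty _ (isOpen_cyl s) (cyl_nonempty s)
  obtain ⟨n, hn⟩ := exists_cyl_init_subset hU hgU
  refine ⟨init g (max n (s.length + 1)), ?_, by simp, ?_⟩
  · simpa only [init_length_of_mem_cyl hgs] using
      init_prefix_init g (show s.length ≤ max n (s.length + 1) by omega)
  · exact (cyl_anti (init_prefix_init g (le_max_left _ _))).trans hn

/-! ### Extension functions and meagre sets -/

def IsStrictExtension (Φ : List ℕ → List ℕ) : Prop := ∀ s, s <+: Φ s ∧ s.length < (Φ s).length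

def Matches (Φ : List ℕ → List ℕ) (g : ℕ → ℕ) : Prop := ∀ N, ∃ s, N ≤ s.length ∧ g ∈ cyl (Φ s)

namespace IsStrictExtension

variable {ψ : List ℕ → List ℕ} (hψ : IsStrictExtension ψ)
include hψ

lemma iterate_prefix_iterate (u : List ℕ) {i j : ℕ} (h : i ≤ j) : ψ^[i] u <+: ψ^[j] u := by
  induction j, h using Nat.le_induction with
  | base => exact List.prefix_refl _
  | succ j _ ih => exact ih.trans (by rw [Function.iterate_succ_apply']; exact (hψ _).1)

lemma prefix_iterate (u : List ℕ) (k : ℕ) : u <+: ψ^[k] u :=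
  hψ.iterate_prefix_iterate u k.zero_le

lemma strictMono_length_iterate (u : List ℕ) : StrictMono fun k => (ψ^[k] u).length :=
  strictMono_nat_of_lt_succ fun k => by
    simp only [Function.iterate_succ_apply']; exact (hψ _).2

lemma length_add_le_length_iterate (u : List ℕ) (k : ℕ) : u.length + k ≤ (ψ^[k] u).length := by
  induction k with
  | zero => simp
  | succ k ih =>
    have := (hψ (ψ^[k] u)).2
    rw [Function.iterate_succ_apply']
    omega

lemma iterate_succ (k : List ℕ → ℕ) : IsStrictExtension fun s => ψ^[k s + 1] s := fun s =>
  ⟨hψ.prefix_iterate s _, (hψ.length_add_le_length_iterate s _).trans_lt' (by omega)⟩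

lemma exists_mem_cyl_iterate : ∃ g, ∀ j, g ∈ cyl (ψ^[j] []) := by
  refine ⟨fun i => (ψ^[i + 1] []).getD i 0, fun j i hi => ?_⟩
  have hlen : i < (ψ^[i + 1] []).length := by
    simpa using hψ.length_add_le_length_iterate [] (i + 1)
  simp only [List.getD_eq_getElem _ _ hlen]
  rcases le_total j (i + 1) with h | h
  · exact ((hψ.iterate_prefix_iterate [] h).getElem hi).symm
  · exact (hψ.iterate_prefix_iterate [] h).getElem hlen

end IsStrictExtension

lemma residual_setOf_matches {Φ : List ℕ → List ℕ} (hΦ : IsStrictExtension Φ) :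
    {g | Matches Φ g} ∈ residual (ℕ → ℕ) := by
  have : {g | Matches Φ g} = ⋂ N : ℕ, ⋃ s ∈ {s : List ℕ | N ≤ s.length}, cyl (Φ s) := by
    ext g; simp [Matches]
  rw [this]
  refine countable_iInter_mem.2 fun N => residual_of_dense_open
    (isOpen_biUnion fun s _ => isOpen_cyl _) (dense_of_forall_cyl_inter_nonempty fun s => ?_)
  obtain ⟨g, hg⟩ := cyl_nonempty (Φ (s ++ List.replicate N 0))
  exact ⟨g, cyl_anti ((List.prefix_append _ _).trans (hΦ _).1) hg,
    mem_biUnion (show N ≤ (s ++ List.replicate N 0).length by simp) hg⟩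

lemma isMeagre_of_forall_matches {Φ : List ℕ → List ℕ} {A : Set (ℕ → ℕ)}
    (hΦ : IsStrictExtension Φ) (hA : ∀ g, Matches Φ g → g ∉ A) : IsMeagre A :=
  Filter.mem_of_superset (residual_setOf_matches hΦ) fun g hg => hA g hg

lemma prefix_foldr {e : ℕ → List ℕ → List ℕ} (he : ∀ n, IsStrictExtension (e n)) (s : List ℕ) :
    ∀ l : List ℕ, s <+: l.foldr e s
  | [] => List.prefix_refl s
  | n :: l => (prefix_foldr he s l).trans (he n _).1

lemma length_lt_length_foldr {e : ℕ → List ℕ → List ℕ} (he : ∀ n, IsStrictExtension (e n))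
    (s : List ℕ) : ∀ {l : List ℕ}, l ≠ [] → s.length < (l.foldr e s).length
  | n :: l, _ => (prefix_foldr he s l).length_le.trans_lt (he n _).2

lemma exists_prefix_foldr {e : ℕ → List ℕ → List ℕ} (he : ∀ n, IsStrictExtension (e n))
    (s : List ℕ) {n : ℕ} : ∀ {l : List ℕ}, n ∈ l → ∃ c, e n c <+: l.foldr e s
  | m :: l, h => by
    obtain rfl | h := List.mem_cons.1 h
    · exact ⟨_, List.prefix_refl _⟩
    · obtain ⟨c, hc⟩ := exists_prefix_foldr he s h
      exact ⟨c, hc.trans (he m _).1⟩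

/-- `Φ s` runs through extensions into the `n`-th dense open set for every `n ≤ |s|`. -/
lemma exists_strictExtension_of_isMeagre {A : Set (ℕ → ℕ)} (hA : IsMeagre A) :
    ∃ Φ, IsStrictExtension Φ ∧ ∀ g, Matches Φ g → g ∉ A := by
  obtain ⟨G, hGA, hG, hGd⟩ := mem_residual.1 hA
  obtain ⟨U, hUo, rfl⟩ := isGδ_iff_eq_iInter_nat.1 hG
  have hUd : ∀ n, Dense (U n) := fun n => hGd.mono (iInter_subset U n)
  choose e hpre hlen hsub using fun n => exists_cyl_subset_of_isOpen_of_dense (hUo n) (hUd n)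
  have he : ∀ n, IsStrictExtension (e n) := fun n s => ⟨hpre n s, hlen n s⟩
  refine ⟨fun s => (List.range (s.length + 1)).foldr e s,
    fun s => ⟨prefix_foldr he s _, ?_⟩, fun g hg => hGA (mem_iInter.2 fun n => ?_)⟩
  · exact length_lt_length_foldr he s (by simp)
  · obtain ⟨s, hns, hgs⟩ := hg n
    obtain ⟨c, hc⟩ := exists_prefix_foldr he s (List.mem_range.2 (Nat.lt_succ_of_le hns))
    exact hsub n c (cyl_anti hc hgs)

/-! ### Bounds from the definitions of the cardinals -/

lemma isMeagre_singleton (x : ℕ → ℕ) : IsMeagre {x} := by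
  refine isMeagre_of_forall_matches (Φ := fun s => s ++ [x s.length + 1])
    (fun s => ⟨List.prefix_append _ _, by simp⟩) fun g hg hgx => ?_
  obtain ⟨s, -, hs⟩ := hg 0
  have := hs s.length (by simp)
  simp [mem_singleton_iff.1 hgx] at this

lemma exists_isMeagre_cover :
    ∃ S : Set (Set (ℕ → ℕ)), (∀ A ∈ S, IsMeagre A) ∧ ⋃₀ S = Set.univ :=
  ⟨range fun x => {x}, forall_mem_range.2 isMeagre_singleton,
    by rw [sUnion_range, iUnion_of_singleton]⟩

lemma addMeager_le_mk {ι : Type} (A : ι → Set (ℕ → ℕ)) (hA : ∀ i, IsMeagre (A i))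
    (h : ¬ IsMeagre (⋃ i, A i)) : addMeager ≤ #ι := by
  refine (csInf_le' ?_).trans (mk_range_le (f := A))
  exact ⟨range A, forall_mem_range.2 hA, by rwa [sUnion_range], rfl⟩

lemma exists_forall_not_mem_of_mk_lt_covMeager {ι : Type} (A : ι → Set (ℕ → ℕ))
    (hA : ∀ i, IsMeagre (A i)) (h : #ι < covMeager) : ∃ w, ∀ i, w ∉ A i := by
  by_contra! hcover
  refine ((csInf_le' ?_).trans (mk_range_le (f := A))).not_gt h
  exact ⟨range A, forall_mem_range.2 hA, eq_univ_of_forall fun w => by simpa using hcover w, rfl⟩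

lemma exists_eventually_le_of_mk_lt_bNumber {ι : Type} (f : ι → ℕ → ℕ) (h : #ι < bNumber) :
    ∃ H : ℕ → ℕ, ∀ i, ∀ᶠ n in atTop, f i n ≤ H n := by
  by_contra hunb
  refine ((csInf_le' ?_).trans (mk_range_le (f := f))).not_gt h
  exact ⟨range f, fun ⟨H, hH⟩ => hunb ⟨H, fun i => hH _ (mem_range_self i)⟩, rfl⟩

lemma not_isMeagre_univ : ¬ IsMeagre (Set.univ : Set (ℕ → ℕ)) :=
  not_isMeagre_of_isOpen isOpen_univ univ_nonempty

theorem addMeager_le_covMeager : addMeager ≤ covMeager := by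
  obtain ⟨S, hS, hcover⟩ := exists_isMeagre_cover
  refine le_csInf ⟨_, S, hS, hcover, rfl⟩ ?_
  rintro _ ⟨S, hS, hcover, rfl⟩
  exact addMeager_le_mk (fun A : S => A.1) (fun A => hS A A.2)
    (by rw [← sUnion_eq_iUnion, hcover]; exact not_isMeagre_univ)

/-! ### `add(M) ≤ b` -/

def nonzeroInWindows (w : ℕ → ℕ) : Set (ℕ → ℕ) :=
  {g | ∀ᶠ n in atTop, ∃ j, n ≤ j ∧ j ≤ n + w n ∧ g j ≠ 0}

lemma isMeagre_nonzeroInWindows (w : ℕ → ℕ) : IsMeagre (nonzeroInWindows w) := by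
  refine isMeagre_of_forall_matches (Φ := fun s => s ++ List.replicate (w s.length + 1) 0)
    (fun s => ⟨List.prefix_append _ _, by simp⟩) fun g hg hgw => ?_
  obtain ⟨N, hN⟩ := eventually_atTop.1 hgw
  obtain ⟨s, hNs, hgs⟩ := hg N
  obtain ⟨j, hsj, hjw, hgj⟩ := hN s.length hNs
  refine hgj ((hgs j (by simp; omega)).trans ?_)
  rw [List.getElem_append_right hsj]
  exact List.getElem_replicate _

lemma exists_le_lt_succ {t : ℕ → ℕ} {n : ℕ} (h0 : t 0 ≤ n) (hn : n < t (n + 1)) :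
    ∃ j, t j ≤ n ∧ n < t (j + 1) := by
  by_contra! h
  have : ∀ j, t j ≤ n := fun j => Nat.rec h0 (fun j ih => h j ih) j
  exact (this (n + 1)).not_gt hn

/-- The witness alternates blocks of `1`s of length `ℓ u` with applications of `Φ`. -/
lemma exists_matches_mem_nonzeroInWindows {Φ : List ℕ → List ℕ} (hΦ : IsStrictExtension Φ)
    {w : ℕ → ℕ} (ℓ : List ℕ → ℕ) (hℓ : ∀ u, 1 ≤ ℓ u)
    (hw : ∀ u n, u.length + ℓ u ≤ n → (Φ (u ++ List.replicate (ℓ u) 1)).length ≤ n + w n) :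
    ∃ g, Matches Φ g ∧ g ∈ nonzeroInWindows w := by
  set pad : List ℕ → List ℕ := fun u => u ++ List.replicate (ℓ u) 1
  have hψ : IsStrictExtension fun u => Φ (pad u) := fun u =>
    ⟨(List.prefix_append _ _).trans (hΦ _).1, (hΦ _).2.trans_le' (by simp [pad])⟩
  obtain ⟨g, hg⟩ := hψ.exists_mem_cyl_iterate
  set t : ℕ → List ℕ := fun j => (fun u => Φ (pad u))^[j] []
  have ht : ∀ j, t (j + 1) = Φ (pad (t j)) := fun j => Function.iterate_succ_apply' _ _ _
  have hpad : ∀ j, g ∈ cyl (pad (t j)) := fun j => cyl_anti (hΦ _).1 (ht j ▸ hg (j + 1))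
  have hone : ∀ j i, (t j).length ≤ i → i < (t j).length + ℓ (t j) → g i = 1 := by
    intro j i h1 h2
    rw [hpad j i (by simp [pad]; omega), List.getElem_append_right h1, List.getElem_replicate]
  have ht_len : ∀ j, j ≤ (t j).length := fun j =>
    (zero_add j).symm.trans_le (hψ.length_add_le_length_iterate [] j)
  refine ⟨g, fun N => ⟨pad (t N), (ht_len N).trans (by simp [pad]), ht N ▸ hg (N + 1)⟩,
    Eventually.of_forall fun n => ?_⟩
  obtain ⟨j, hj, hnj⟩ :=
    exists_le_lt_succ (t := fun j => (t j).length) (n := n) (by simp [t]) (ht_len (n + 1))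
  by_cases hblock : n < (t j).length + ℓ (t j)
  · exact ⟨n, le_rfl, by omega, by simp [hone j n hj hblock]⟩
  · refine ⟨(t (j + 1)).length, hnj.le, ?_, ?_⟩
    · rw [ht]; exact hw _ n (by omega)
    · have := hℓ (t (j + 1))
      simp [hone (j + 1) _ le_rfl (by omega)]

lemma exists_eventually_le_of_countable {ι : Type*} [Countable ι] (D : ι → ℕ → ℕ) :
    ∃ H : ℕ → ℕ, ∀ i, ∀ᶠ n in atTop, D i n ≤ H n := by
  cases isEmpty_or_nonempty ι
  · exact ⟨0, isEmptyElim⟩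
  obtain ⟨e, he⟩ := exists_surjective_nat ι
  refine ⟨fun n => (Finset.range (n + 1)).sup fun k => D (e k) n, fun i => ?_⟩
  obtain ⟨k, rfl⟩ := he i
  exact eventually_atTop.2 ⟨k, fun n hn =>
    Finset.le_sup (f := fun k => D (e k) n) (Finset.mem_range.2 (by omega))⟩

lemma exists_lt_length_of_forall_matches_not_mem {Φ : List ℕ → List ℕ}
    (hΦ : IsStrictExtension Φ) {f : ℕ → ℕ}
    (hA : ∀ g, Matches Φ g → g ∉ nonzeroInWindows (partialSups f)) :
    ∃ u : List ℕ, ∀ m, u.length < m →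
      f m < (Φ (u ++ List.replicate (m - u.length) 1)).length := by
  by_contra! h
  choose m hm hfm using h
  have hw : ∀ u n, u.length + (m u - u.length) ≤ n →
      (Φ (u ++ List.replicate (m u - u.length) 1)).length ≤ n + partialSups f n := by
    intro u n hn
    calc (Φ (u ++ List.replicate (m u - u.length) 1)).length ≤ f (m u) := hfm u
      _ ≤ partialSups f (m u) := le_partialSups f _
      _ ≤ partialSups f n := (partialSups f).monotone (by have := hm u; omega)
      _ ≤ n + partialSups f n := Nat.le_add_left _ _
  obtain ⟨g, hgΦ, hgw⟩ := exists_matches_mem_nonzeroInWindows hΦ (fun u => m u - u.length)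
    (fun u => by have := hm u; omega) hw
  exact hA g hgΦ hgw

theorem addMeager_le_bNumber : addMeager ≤ bNumber := by
  refine le_csInf ⟨_, Set.univ, fun ⟨g, hg⟩ => ?_, rfl⟩ ?_
  · obtain ⟨n, hn⟩ := (hg (g + 1) (mem_univ _)).exists
    simp at hn
  rintro _ ⟨F, hF, rfl⟩
  refine addMeager_le_mk (fun f : F => nonzeroInWindows (partialSups f.1))
    (fun _ => isMeagre_nonzeroInWindows _) fun hmeagre => hF ?_
  obtain ⟨Φ, hΦ, hA⟩ := exists_strictExtension_of_isMeagre hmeagre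
  choose u hu using fun f : F => exists_lt_length_of_forall_matches_not_mem hΦ
    fun g hg hgf => hA g hg (mem_iUnion.2 ⟨f, hgf⟩)
  obtain ⟨H, hH⟩ := exists_eventually_le_of_countable
    fun (v : List ℕ) m => (Φ (v ++ List.replicate (m - v.length) 1)).length
  refine ⟨H, fun f hf => ?_⟩
  filter_upwards [hH (u ⟨f, hf⟩), eventually_gt_atTop (u ⟨f, hf⟩).length] with m hHm hm
  exact (hu ⟨f, hf⟩ m hm).le.trans hHm

/-! ### `min(b, cov(M)) ≤ add(M)` -/

/-- The final `0` makes the extension strict even when the coded list is empty. -/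
def codedExtension (w : ℕ → ℕ) (s : List ℕ) : List ℕ :=
  s ++ Denumerable.ofNat (List ℕ) (w (Encodable.encode s)) ++ [0]

lemma isStrictExtension_codedExtension (w : ℕ → ℕ) : IsStrictExtension (codedExtension w) :=
  fun s => ⟨(List.prefix_append _ _).trans (List.prefix_append _ _), by simp [codedExtension]⟩

lemma eventually_iterate_codedExtension_eq (w : ℕ → ℕ) (u : List ℕ) (k : ℕ) :
    ∀ᶠ w' in 𝓝 w, (codedExtension w')^[k] u = (codedExtension w)^[k] u := by
  induction k with
  | zero => exact Eventually.of_forall fun _ => rfl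
  | succ k ih =>
    have hc : ∀ᶠ w' in 𝓝 w, w' (Encodable.encode ((codedExtension w)^[k] u)) =
        w (Encodable.encode ((codedExtension w)^[k] u)) := by
      have := (continuous_apply (Encodable.encode ((codedExtension w)^[k] u))).tendsto w
      rw [nhds_discrete ℕ] at this
      exact tendsto_pure.1 this
    filter_upwards [ih, hc] with w' h1 h2
    simp only [Function.iterate_succ_apply', h1]
    simp only [codedExtension, h2]

lemma iterate_codedExtension_congr {w w' : ℕ → ℕ} {u : List ℕ} {k : ℕ}
    (h : ∀ j < k, w' (Encodable.encode ((codedExtension w)^[j] u)) =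
      w (Encodable.encode ((codedExtension w)^[j] u))) :
    (codedExtension w')^[k] u = (codedExtension w)^[k] u := by
  induction k with
  | zero => rfl
  | succ k ih =>
    simp only [Function.iterate_succ_apply', ih fun j hj => h j (by omega)]
    simp only [codedExtension, h k k.lt_succ_self]

def hits (Φ : List ℕ → List ℕ) (u : List ℕ) : Set (ℕ → ℕ) :=
  {w | ∃ k, Φ ((codedExtension w)^[k] u) <+: (codedExtension w)^[k + 1] u}

lemma isOpen_hits (Φ : List ℕ → List ℕ) (u : List ℕ) : IsOpen (hits Φ u) := by
  refine isOpen_iff_mem_nhds.2 fun w ⟨k, hk⟩ => ?_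
  filter_upwards [eventually_iterate_codedExtension_eq w u k,
    eventually_iterate_codedExtension_eq w u (k + 1)] with w' h1 h2
  exact ⟨k, by rwa [h1, h2]⟩

lemma dense_hits {Φ : List ℕ → List ℕ} (hΦ : IsStrictExtension Φ) (u : List ℕ) :
    Dense (hits Φ u) := by
  refine dense_of_forall_cyl_inter_nonempty fun s => ?_
  obtain ⟨w, hw⟩ := cyl_nonempty s
  have hE := isStrictExtension_codedExtension w
  set σ := (codedExtension w)^[s.length] u
  -- Redirecting `w` at the code of `σ` changes neither `w` on `s` nor the orbit up to `σ`.
  have hσ : s.length ≤ Encodable.encode σ :=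
    (Nat.le_add_left _ _).trans ((hE.length_add_le_length_iterate u _).trans
      (Encodable.length_le_encode σ))
  set w' := Function.update w (Encodable.encode σ) (Encodable.encode ((Φ σ).drop σ.length))
  have horbit : (codedExtension w')^[s.length] u = σ :=
    iterate_codedExtension_congr fun j hj => Function.update_of_ne (fun heq =>
      (hE.strictMono_length_iterate u hj).ne
        (congrArg List.length (Encodable.encode_injective heq))) _ _
  refine ⟨w', fun i hi => ?_, s.length, ?_⟩
  · have hne : i ≠ Encodable.encode σ := by omega
    simpa only [w', Function.update_of_ne hne] using hw i hi
  · rw [Function.iterate_succ_apply', horbit]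
    simp only [codedExtension, w', Function.update_self, Denumerable.ofNat_encode,
      List.prefix_iff_eq_append.1 (hΦ σ).1]
    exact List.prefix_append _ _

lemma exists_forall_mem_hits {ι : Type} {Φ : ι → List ℕ → List ℕ}
    (hΦ : ∀ i, IsStrictExtension (Φ i)) (h : #ι < covMeager) : ∃ w, ∀ i u, w ∈ hits (Φ i) u := by
  obtain ⟨w, hw⟩ := exists_forall_not_mem_of_mk_lt_covMeager (fun i => ⋃ u, (hits (Φ i) u)ᶜ)
    (fun i => isMeagre_iUnion fun u => by
      rw [IsMeagre, compl_compl]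
      exact residual_of_dense_open (isOpen_hits _ u) (dense_hits (hΦ i) u))
    h
  exact ⟨w, fun i => by simpa using hw i⟩

lemma exists_strictExtension_forall_matches {ι : Type} {Φ : ι → List ℕ → List ℕ}
    (hΦ : ∀ i, IsStrictExtension (Φ i)) (hb : #ι < bNumber) (hc : #ι < covMeager) :
    ∃ Ψ, IsStrictExtension Ψ ∧ ∀ g, Matches Ψ g → ∀ i, Matches (Φ i) g := by
  obtain ⟨w, hw⟩ := exists_forall_mem_hits hΦ hc
  choose τ hτ using hw
  obtain ⟨R, hR⟩ :=
    exists_eventually_le_of_mk_lt_bNumber (fun i n => τ i (Denumerable.ofNat (List ℕ) n)) hb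
  have hE := isStrictExtension_codedExtension w
  refine ⟨fun s => (codedExtension w)^[R (Encodable.encode s) + 1] s, hE.iterate_succ _,
    fun g hg i N => ?_⟩
  obtain ⟨n₀, hn₀⟩ := eventually_atTop.1 (hR i)
  obtain ⟨s, hs, hgs⟩ := hg (max N n₀)
  have hτR : τ i s ≤ R (Encodable.encode s) := by
    simpa using hn₀ (Encodable.encode s) (by have := Encodable.length_le_encode s; omega)
  refine ⟨(codedExtension w)^[τ i s] s, ?_,
    cyl_anti ((hτ i s).trans (hE.iterate_prefix_iterate s (by omega))) hgs⟩
  have := hE.length_add_le_length_iterate s (τ i s)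
  omega

theorem isMeagre_sUnion_of_mk_lt {S : Set (Set (ℕ → ℕ))} (hS : ∀ A ∈ S, IsMeagre A)
    (hb : #S < bNumber) (hc : #S < covMeager) : IsMeagre (⋃₀ S) := by
  choose Φ hΦ hA using fun A : S => exists_strictExtension_of_isMeagre (hS A A.2)
  obtain ⟨Ψ, hΨ, hmatch⟩ := exists_strictExtension_forall_matches hΦ hb hc
  exact isMeagre_of_forall_matches hΨ fun g hg ⟨A, hAS, hgA⟩ =>
    hA ⟨A, hAS⟩ g (hmatch g hg _) hgA

end MillerTruss

/-- Miller–Truss: `add(M) = min(b, cov(M))`. -/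
theorem stmt_14 : addMeager = min bNumber covMeager := by
  refine le_antisymm
    (le_min MillerTruss.addMeager_le_bNumber MillerTruss.addMeager_le_covMeager) ?_
  obtain ⟨S, hS, hcover⟩ := MillerTruss.exists_isMeagre_cover
  refine le_csInf ⟨_, S, hS, by rw [hcover]; exact MillerTruss.not_isMeagre_univ, rfl⟩ ?_
  rintro _ ⟨S, hS, hS', rfl⟩
  by_contra! h
  exact hS' (MillerTruss.isMeagre_sUnion_of_mk_lt hS (h.trans_le (min_le_left _ _))
    (h.trans_le (min_le_right _ _)))
end

section
/- cf(M) = max(d, non(M)), where d is the dominating number, non(M) the uniformity of the meager ideal, and cf(M) the cofinality of the meager ideal. -/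
open Filter Cardinal

/-- `cf(M)`: the least size of a family of meager subsets of Baire space `ω^ω` cofinal in
the meager ideal under inclusion. -/
noncomputable def cfMeager : Cardinal :=
  sInf {c | ∃ S : Set (Set (ℕ → ℕ)), (∀ A ∈ S, IsMeagre A) ∧
    (∀ B : Set (ℕ → ℕ), IsMeagre B → ∃ A ∈ S, B ⊆ A) ∧ #S = c}

/-- `non(M)`: the least size of a non-meager subset of Baire space. -/
noncomputable def nonMeager : Cardinal :=
  sInf {c | ∃ A : Set (ℕ → ℕ), ¬ IsMeagre A ∧ #A = c}

/-- `d`: the least size of a `≤*`-dominating family in `ω^ω`. -/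
noncomputable def dNumber : Cardinal :=
  sInf {c | ∃ C : Set (ℕ → ℕ),
    (∀ f : ℕ → ℕ, ∃ g ∈ C, ∀ᶠ n in atTop, f n ≤ g n) ∧ #C = c}

/-!
Every meagre subset of Baire space lies in a set `avoidSet e y` of points that, from some
interval on, fail to copy `y` on the intervals `[e m, e (m + 1))` of a partition `e`, and all
these sets are meagre. Such a set grows when `e` is coarsened to a partition each of whose
intervals contains an interval on which a new `y'` copies `y`. Taking `y'` from a fixed
non-meagre set and letting a fixed dominating family control the coarsening gives a cofinal
family of size `d · non(M)`.

Conversely, choosing a point outside each member of a cofinal family gives a non-meagre set.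
And if the nowhere dense set `{x | x ≤ h}` lies in `avoidSet e y`, then `y` exceeds `h`
somewhere in almost every interval of `e`, so the blockwise maxima of the `y`'s of a cofinal
family form a dominating family.
-/

open Set PiNat

namespace MeagreIdeal

section Cylinders

variable {E : ℕ → Type*} [∀ n, TopologicalSpace (E n)] [∀ n, DiscreteTopology (E n)]

lemma exists_cylinder_subset {U : Set (∀ n, E n)} (hU : IsOpen U) {x : ∀ n, E n} (hx : x ∈ U) :
    ∃ n, cylinder x n ⊆ U := by
  obtain ⟨v, ⟨z, n, rfl⟩, hxv, hvU⟩ :=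
    (isTopologicalBasis_cylinders E).exists_subset_of_mem_open hx hU
  exact ⟨n, mem_cylinder_iff_eq.1 hxv ▸ hvU⟩

lemma exists_cylinder_subset_of_dense {U : Set (∀ n, E n)} (hd : Dense U) (hU : IsOpen U)
    (x : ∀ n, E n) (n : ℕ) : ∃ z ∈ cylinder x n, ∃ p, n ≤ p ∧ cylinder z p ⊆ U := by
  obtain ⟨z, hzU, hzx⟩ := hd.exists_mem_open (isOpen_cylinder _ x n) ⟨x, self_mem_cylinder x n⟩
  obtain ⟨p, hp⟩ := exists_cylinder_subset hU hzU
  exact ⟨z, hzx, max n p, le_max_left n p, (cylinder_anti z (le_max_right n p)).trans hp⟩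

end Cylinders

def splice (n : ℕ) (s z : ℕ → ℕ) : ℕ → ℕ := fun k => if k < n then s k else z k

lemma exists_splice_cylinder_subset {U : Set (ℕ → ℕ)} (hd : Dense U) (hU : IsOpen U) (n : ℕ)
    (G : Finset (ℕ → ℕ)) :
    ∃ (z : ℕ → ℕ) (p : ℕ), n < p ∧ ∀ s ∈ G, cylinder (splice n s z) p ⊆ U := by
  classical
  induction G using Finset.induction_on with
  | empty => exact ⟨0, n + 1, n.lt_succ_self, by simp⟩
  | @insert s G _ ih =>
    obtain ⟨z, p, hnp, hz⟩ := ih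
    obtain ⟨z', hz'z, p', hpp', hz'U⟩ := exists_cylinder_subset_of_dense hd hU (splice n s z) p
    have hz'_eq : ∀ t, splice n t z' ∈ cylinder (splice n t z) p := by
      intro t i hi
      by_cases hin : i < n
      · simp only [splice, if_pos hin]
      · simpa only [splice, if_neg hin] using hz'z i hi
    refine ⟨z', p', hnp.trans_le hpp', fun t ht => ?_⟩
    rcases Finset.mem_insert.1 ht with rfl | htG
    · have : splice n t z' = z' := funext fun k => by
        by_cases hkn : k < n
        · simpa [splice, hkn] using (hz'z k (hkn.trans hnp)).symm
        · simp [splice, hkn]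
      rwa [this]
    · calc cylinder (splice n t z') p' ⊆ cylinder (splice n t z') p := cylinder_anti _ hpp'
        _ = cylinder (splice n t z) p := mem_cylinder_iff_eq.1 (hz'_eq t)
        _ ⊆ U := hz t htG

/-- There are only finitely many prefixes of length `n` with values below `n`, so one block
can be chosen for all of them at once. -/
lemma exists_block_forcing_mem {U : Set (ℕ → ℕ)} (hd : Dense U) (hU : IsOpen U) (n : ℕ) :
    ∃ (z : ℕ → ℕ) (p : ℕ), n < p ∧ ∀ x : ℕ → ℕ, (∀ k < n, x k < n) →
      (∀ k, n ≤ k → k < p → x k = z k) → x ∈ U := by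
  classical
  let pad : (Fin n → Fin n) → ℕ → ℕ := fun σ k => if h : k < n then σ ⟨k, h⟩ else 0
  obtain ⟨z, p, hnp, hz⟩ := exists_splice_cylinder_subset hd hU n (Finset.univ.image pad)
  refine ⟨z, p, hnp, fun x hxn hxz => ?_⟩
  have hsplice : splice n (pad fun i => ⟨x i, hxn i i.2⟩) z = splice n x z := by
    funext k
    by_cases hkn : k < n <;> simp [splice, pad, hkn]
  refine hz _ (Finset.mem_image_of_mem pad (Finset.mem_univ fun i => ⟨x i, hxn i i.2⟩)) ?_
  rw [hsplice]
  intro i hi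
  by_cases hin : i < n
  · simp [splice, hin]
  · simpa [splice, hin] using hxz i (not_lt.1 hin) hi

/-- The bound before `e m` keeps the number of possible prefixes finite; this is what makes the
combinatorial description of meagre sets by interval partitions work in Baire space and not
only in Cantor space. -/
def MatchesBlock (e y x : ℕ → ℕ) (m : ℕ) : Prop :=
  (∀ k, e m ≤ k → k < e (m + 1) → x k = y k) ∧ ∀ k < e m, x k < e m

def avoidSet (e y : ℕ → ℕ) : Set (ℕ → ℕ) := {x | ∀ᶠ m in atTop, ¬ MatchesBlock e y x m}

lemma isOpen_setOf_matchesBlock (e y : ℕ → ℕ) (m : ℕ) :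
    IsOpen {x : ℕ → ℕ | MatchesBlock e y x m} := by
  refine isOpen_iff_forall_mem_open.2 fun x hx =>
    ⟨cylinder x (e m + e (m + 1)), fun w hw => ?_, isOpen_cylinder _ _ _, self_mem_cylinder _ _⟩
  exact ⟨fun k hk₁ hk₂ => (hw k (by omega)).trans (hx.1 k hk₁ hk₂),
    fun k hk => (hw k (by omega)).trans_lt (hx.2 k hk)⟩

lemma dense_iUnion_matchesBlock {e : ℕ → ℕ} (he : StrictMono e) (y : ℕ → ℕ) (N : ℕ) :
    Dense (⋃ m ≥ N, {x : ℕ → ℕ | MatchesBlock e y x m}) := by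
  rw [dense_iff_inter_open]
  rintro U hU ⟨x, hxU⟩
  obtain ⟨n, hn⟩ := exists_cylinder_subset hU hxU
  let b := (Finset.range n).sup x
  let m := max N (n + b + 1)
  have hem : n + b + 1 ≤ e m := (le_max_right _ _).trans (he.id_le m)
  let w : ℕ → ℕ := fun k => if k < n then x k else if k < e m then 0 else y k
  have hw : MatchesBlock e y w m := by
    refine ⟨fun k hk₁ _ => ?_, fun k hk => ?_⟩
    · simp [w, show ¬ k < n by omega, show ¬ k < e m by omega]
    · by_cases hkn : k < n
      · have : x k ≤ b := Finset.le_sup (Finset.mem_range.2 hkn)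
        simp only [w, if_pos hkn]
        omega
      · simp only [w, if_neg hkn, if_pos hk]
        omega
  exact ⟨w, hn fun i hi => by simp [w, hi], mem_biUnion (le_max_left N _) hw⟩

lemma isMeagre_avoidSet {e : ℕ → ℕ} (he : StrictMono e) (y : ℕ → ℕ) :
    IsMeagre (avoidSet e y) := by
  have hres : ∀ᶠ x in residual (ℕ → ℕ), ∀ N, ∃ m ≥ N, MatchesBlock e y x m :=
    eventually_countable_forall.2 fun N => by
      filter_upwards [residual_of_dense_open
        (isOpen_biUnion fun m _ => isOpen_setOf_matchesBlock e y m)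
        (dense_iUnion_matchesBlock he y N)] with x hx
      obtain ⟨m, hm, hxm⟩ := mem_iUnion₂.1 hx
      exact ⟨m, hm, hxm⟩
  filter_upwards [hres] with x hx
  simpa [avoidSet, frequently_atTop] using hx

lemma exists_partition_forcing {U : ℕ → Set (ℕ → ℕ)} (hd : ∀ m, Dense (U m))
    (hU : ∀ m, IsOpen (U m)) :
    ∃ e y : ℕ → ℕ, StrictMono e ∧ ∀ m x, MatchesBlock e y x m → x ∈ U m := by
  choose z p hp hzp using fun m => exists_block_forcing_mem (hd m) (hU m)
  let e : ℕ → ℕ := fun m => Nat.rec 0 (fun m a => p m a) m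
  have he : StrictMono e := strictMono_nat_of_lt_succ fun m => hp m (e m)
  have hblock : ∀ k, ∃ m, k < e (m + 1) := fun k => ⟨k, (he.id_le k).trans_lt (he k.lt_succ_self)⟩
  have hfind : ∀ m k, e m ≤ k → k < e (m + 1) → Nat.find (hblock k) = m := by
    refine fun m k hk₁ hk₂ => (Nat.find_eq_iff _).2 ⟨hk₂, fun j hj => ?_⟩
    exact not_lt.2 ((he.monotone hj).trans hk₁)
  -- `Nat.find (hblock k)` is the index of the interval of `e` containing `k`.
  refine ⟨e, fun k => z (Nat.find (hblock k)) (e (Nat.find (hblock k))) k, he,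
    fun m x hx => hzp m (e m) x hx.2 fun k hk₁ hk₂ => ?_⟩
  rw [hx.1 k hk₁ hk₂]
  dsimp only
  rw [hfind m k hk₁ hk₂]

/-- Blass's combinatorial description of the meagre ideal of Baire space. -/
lemma exists_subset_avoidSet_of_isMeagre {A : Set (ℕ → ℕ)} (hA : IsMeagre A) :
    ∃ e y : ℕ → ℕ, StrictMono e ∧ A ⊆ avoidSet e y := by
  obtain ⟨t, htA, htGδ, htd⟩ := mem_residual.1 hA
  obtain ⟨U, hUo, rfl⟩ := isGδ_iff_eq_iInter_nat.1 htGδ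
  have hUd : ∀ i, Dense (U i) := fun i => htd.mono (iInter_subset U i)
  obtain ⟨e, y, he, hey⟩ := exists_partition_forcing
    (U := fun m => ⋂ i ∈ Iic m, U i)
    (fun m => dense_biInter_of_isOpen (fun i _ => hUo i) (finite_Iic m).countable fun i _ => hUd i)
    (fun m => (finite_Iic m).isOpen_biInter fun i _ => hUo i)
  refine ⟨e, y, he, fun x hxA => ?_⟩
  by_contra hx
  refine htA (mem_iInter.2 fun i => ?_) hxA
  obtain ⟨m, him, hm⟩ := frequently_atTop.1 (not_eventually.1 hx) i
  exact mem_iInter₂.1 (hey m x (not_not.1 hm)) i him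

lemma MatchesBlock.trans {e y e' y' x : ℕ → ℕ} {m n : ℕ} (hx : MatchesBlock e' y' x n)
    (hy' : MatchesBlock e y y' m) (hm : e m ≤ e (m + 1)) (h₁ : e' n ≤ e m)
    (h₂ : e (m + 1) ≤ e' (n + 1)) : MatchesBlock e y x m := by
  refine ⟨fun k hk₁ hk₂ => ?_, fun k hk => ?_⟩
  · rw [hx.1 k (h₁.trans hk₁) (hk₂.trans_le h₂)]
    exact hy'.1 k hk₁ hk₂
  · by_cases hkn : k < e' n
    · exact (hx.2 k hkn).trans_le h₁
    · rw [hx.1 k (not_lt.1 hkn) (hk.trans_le (hm.trans h₂))]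
      exact hy'.2 k hk

lemma avoidSet_subset_avoidSet {e y e' y' : ℕ → ℕ} (he : StrictMono e) (he' : StrictMono e')
    (H : ∀ᶠ n in atTop, ∃ m, e' n ≤ e m ∧ e (m + 1) ≤ e' (n + 1) ∧ MatchesBlock e y y' m) :
    avoidSet e y ⊆ avoidSet e' y' := by
  intro x hx
  by_contra hx'
  refine not_frequently.2 hx (frequently_atTop.2 fun M => ?_)
  obtain ⟨n, hn, hxn, m, h₁, h₂, hy'm⟩ :=
    frequently_atTop.1 ((not_eventually.1 hx').and_eventually H) (e M)
  refine ⟨m, he.le_iff_le.1 (hn.trans ((he'.id_le n).trans h₁)), ?_⟩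
  exact (not_not.1 hxn).trans hy'm (he.monotone m.le_succ) h₁ h₂

def partitionAbove (f : ℕ → ℕ) : ℕ → ℕ
  | 0 => 0
  | n + 1 => f (partitionAbove f n) + partitionAbove f n + 1

lemma partitionAbove_strictMono (f : ℕ → ℕ) : StrictMono (partitionAbove f) :=
  strictMono_nat_of_lt_succ fun n => by simp only [partitionAbove]; omega

lemma le_partitionAbove_succ (f : ℕ → ℕ) (n : ℕ) :
    f (partitionAbove f n) ≤ partitionAbove f (n + 1) := by
  simp only [partitionAbove]; omega

/-- `g q` is the right end of an interval of `e` beyond `q` on which `y'` matches `y`. -/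
lemma exists_avoidSet_subset_avoidSet_partitionAbove {e y y' : ℕ → ℕ} (he : StrictMono e)
    (hy' : y' ∉ avoidSet e y) : ∃ g : ℕ → ℕ, ∀ f : ℕ → ℕ, (∀ᶠ n in atTop, g n ≤ f n) →
      avoidSet e y ⊆ avoidSet (partitionAbove f) y' := by
  have hfreq : ∀ q, ∃ m, q ≤ e m ∧ MatchesBlock e y y' m := fun q => by
    obtain ⟨m, hqm, hm⟩ := frequently_atTop.1 (not_eventually.1 hy') q
    exact ⟨m, hqm.trans (he.id_le m), not_not.1 hm⟩
  choose μ hμ hμy using hfreq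
  refine ⟨fun q => e (μ q + 1), fun f hgf => avoidSet_subset_avoidSet he
    (partitionAbove_strictMono f) ?_⟩
  filter_upwards [(partitionAbove_strictMono f).tendsto_atTop.eventually hgf] with n hn
  exact ⟨μ _, hμ _, hn.trans (le_partitionAbove_succ f n), hμy _⟩

lemma isMeagre_setOf_forall_le (h : ℕ → ℕ) : IsMeagre {x : ℕ → ℕ | ∀ k, x k ≤ h k} := by
  have hclosed : IsClosed {x : ℕ → ℕ | ∀ k, x k ≤ h k} := by
    simp only [ofPred_forall]
    exact isClosed_iInter fun k => isClosed_le (continuous_apply k) continuous_const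
  refine IsNowhereDense.isMeagre (hclosed.isNowhereDense_iff.2 ?_)
  refine eq_empty_of_forall_notMem fun x hx => ?_
  obtain ⟨q, hq⟩ := exists_cylinder_subset isOpen_interior hx
  have := interior_subset (hq (update_mem_cylinder x q (h q + 1))) q
  simp at this

lemma isMeagre_of_countable {A : Set (ℕ → ℕ)} (hA : A.Countable) : IsMeagre A :=
  (isMeagre_biUnion hA fun a _ => isMeagre_setOf_forall_le a).mono
    fun x hx => mem_biUnion hx (show x ∈ {z : ℕ → ℕ | ∀ k, z k ≤ x k} from fun _ => le_rfl)

lemma not_isMeagre_univ : ¬ IsMeagre (univ : Set (ℕ → ℕ)) :=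
  not_isMeagre_of_isOpen isOpen_univ univ_nonempty

lemma exists_sparse_blocks {e : ℕ → ℕ} (he : StrictMono e) (y : ℕ → ℕ) {P : ℕ → Prop}
    (hP : ∃ᶠ m in atTop, P m) : ∃ φ : ℕ → ℕ, StrictMono φ ∧ (∀ i, P (φ i) ∧ 0 < e (φ i)) ∧
      ∀ i j, i < j → e (φ i + 1) ≤ e (φ j) ∧ ∀ k < e (φ i + 1), y k < e (φ j) := by
  obtain ⟨φ, hφP, hφr⟩ := exists_seq_of_forall_finset_exists (fun m => P m ∧ 0 < e m)
    (fun m m' => e (m + 1) ≤ e m' ∧ ∀ k < e (m + 1), y k < e m') fun s _ => by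
      let c := s.sup fun m => e (m + 1) + (Finset.range (e (m + 1))).sup y
      obtain ⟨m', hm', hPm'⟩ := frequently_atTop.1 hP (c + 1)
      have hc : c < e m' := (Nat.lt_of_succ_le hm').trans_le (he.id_le m')
      refine ⟨m', ⟨hPm', by omega⟩, fun m hm => ?_⟩
      have hmc : e (m + 1) + (Finset.range (e (m + 1))).sup y ≤ c :=
        Finset.le_sup (f := fun m => e (m + 1) + (Finset.range (e (m + 1))).sup y) hm
      refine ⟨by omega, fun k hk => ?_⟩
      have : y k ≤ (Finset.range (e (m + 1))).sup y := Finset.le_sup (Finset.mem_range.2 hk)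
      omega
  refine ⟨φ, strictMono_nat_of_lt_succ fun i => ?_, hφP, hφr⟩
  exact he.lt_iff_lt.1 ((he (φ i).lt_succ_self).trans_le (hφr i (i + 1) i.lt_succ_self).1)

/-- If not, `y` fits below `h` on infinitely many intervals; copying `y` on a sparse
subsequence of them (and `0` elsewhere) gives a point below `h` matching `y` infinitely often. -/
lemma eventually_exists_lt_of_setOf_le_subset {e y h : ℕ → ℕ} (he : StrictMono e)
    (hsub : {x : ℕ → ℕ | ∀ k, x k ≤ h k} ⊆ avoidSet e y) :
    ∀ᶠ m in atTop, ∃ k, e m ≤ k ∧ k < e (m + 1) ∧ h k < y k := by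
  classical
  by_contra hfit
  simp only [not_eventually, not_exists, not_and, not_lt] at hfit
  obtain ⟨φ, hφ, hφP, hφr⟩ := exists_sparse_blocks he y hfit
  let x : ℕ → ℕ := fun k => if ∃ i, e (φ i) ≤ k ∧ k < e (φ i + 1) then y k else 0
  have hmatch : ∀ i, MatchesBlock e y x (φ i) := by
    refine fun i => ⟨fun k hk₁ hk₂ => if_pos ⟨i, hk₁, hk₂⟩, fun k hk => ?_⟩
    by_cases hki : ∃ j, e (φ j) ≤ k ∧ k < e (φ j + 1)
    · obtain ⟨j, hj₁, hj₂⟩ := hki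
      rcases lt_or_ge j i with hji | hij
      · simp only [x, if_pos (show ∃ j, e (φ j) ≤ k ∧ k < e (φ j + 1) from ⟨j, hj₁, hj₂⟩)]
        exact (hφr j i hji).2 k hj₂
      · exact absurd (hk.trans_le ((he.monotone (hφ.monotone hij)).trans hj₁)) (lt_irrefl k)
    · simpa only [x, if_neg hki] using (hφP i).2
  have hx : ∀ k, x k ≤ h k := fun k => by
    by_cases hki : ∃ i, e (φ i) ≤ k ∧ k < e (φ i + 1)
    · obtain ⟨i, hi₁, hi₂⟩ := hki
      simp only [x, if_pos (show ∃ i, e (φ i) ≤ k ∧ k < e (φ i + 1) from ⟨i, hi₁, hi₂⟩)]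
      exact (hφP i).1 k hi₁ hi₂
    · simp [x, if_neg hki]
  exact not_frequently.2 (hsub hx) (hφ.tendsto_atTop.frequently (Frequently.of_forall hmatch))

lemma nonMeager_le_mk {A : Set (ℕ → ℕ)} (hA : ¬ IsMeagre A) : nonMeager ≤ #A :=
  csInf_le' ⟨A, hA, rfl⟩

lemma dNumber_le_mk {C : Set (ℕ → ℕ)} (hC : ∀ f : ℕ → ℕ, ∃ g ∈ C, ∀ᶠ n in atTop, f n ≤ g n) :
    dNumber ≤ #C :=
  csInf_le' ⟨C, hC, rfl⟩

lemma aleph0_le_nonMeager : ℵ₀ ≤ nonMeager :=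
  le_csInf ⟨_, univ, not_isMeagre_univ, rfl⟩ fun _ ⟨_, hA, hc⟩ => hc ▸ not_lt.1 fun h =>
    hA (isMeagre_of_countable (lt_aleph0_iff_set_finite.1 h).countable)

lemma exists_dominating_card_eq : ∃ D : Set (ℕ → ℕ),
    (∀ f : ℕ → ℕ, ∃ g ∈ D, ∀ᶠ n in atTop, f n ≤ g n) ∧ #D = dNumber :=
  csInf_mem (s := {c | ∃ C : Set (ℕ → ℕ), (∀ f : ℕ → ℕ, ∃ g ∈ C, ∀ᶠ n in atTop, f n ≤ g n) ∧
    #C = c}) ⟨_, univ, fun f => ⟨f, mem_univ f, Eventually.of_forall fun _ => le_rfl⟩, rfl⟩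

lemma exists_not_isMeagre_card_eq : ∃ X : Set (ℕ → ℕ), ¬ IsMeagre X ∧ #X = nonMeager :=
  csInf_mem (s := {c | ∃ A : Set (ℕ → ℕ), ¬ IsMeagre A ∧ #A = c})
    ⟨_, univ, not_isMeagre_univ, rfl⟩

lemma cfMeager_le_max : cfMeager ≤ max dNumber nonMeager := by
  obtain ⟨D, hD, hDcard⟩ := exists_dominating_card_eq
  obtain ⟨X, hX, hXcard⟩ := exists_not_isMeagre_card_eq
  let S := image2 (fun f y => avoidSet (partitionAbove f) y) D X
  have hmeagre : ∀ A ∈ S, IsMeagre A :=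
    forall_mem_image2.2 fun f _ y _ => isMeagre_avoidSet (partitionAbove_strictMono f) y
  have hcof : ∀ B : Set (ℕ → ℕ), IsMeagre B → ∃ A ∈ S, B ⊆ A := by
    intro B hB
    obtain ⟨e, y, he, hBe⟩ := exists_subset_avoidSet_of_isMeagre hB
    obtain ⟨y', hy'X, hy'⟩ := not_subset.1 fun hsub => hX ((isMeagre_avoidSet he y).mono hsub)
    obtain ⟨g, hg⟩ := exists_avoidSet_subset_avoidSet_partitionAbove he hy'
    obtain ⟨f, hfD, hgf⟩ := hD g
    exact ⟨_, mem_image2_of_mem hfD hy'X, hBe.trans (hg f hgf)⟩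
  calc cfMeager ≤ #S := csInf_le' ⟨S, hmeagre, hcof, rfl⟩
    _ ≤ #D * #X := mk_image2_le
    _ = dNumber * nonMeager := by rw [hDcard, hXcard]
    _ ≤ max dNumber nonMeager := mul_le_max_of_aleph0_le_right aleph0_le_nonMeager

lemma le_cfMeager {c : Cardinal} (h : ∀ S : Set (Set (ℕ → ℕ)), (∀ A ∈ S, IsMeagre A) →
    (∀ B : Set (ℕ → ℕ), IsMeagre B → ∃ A ∈ S, B ⊆ A) → c ≤ #S) : c ≤ cfMeager :=
  le_csInf ⟨_, {A | IsMeagre A}, fun _ hA => hA, fun B hB => ⟨B, hB, subset_rfl⟩, rfl⟩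
    fun _ ⟨S, hS, hcof, hc⟩ => hc ▸ h S hS hcof

lemma nonMeager_le_cfMeager : nonMeager ≤ cfMeager := by
  refine le_cfMeager fun S hS hcof => ?_
  have hpick : ∀ A : S, ∃ x, x ∉ (A : Set (ℕ → ℕ)) := fun A =>
    not_forall.1 fun h => not_isMeagre_univ (eq_univ_of_forall h ▸ hS A A.2)
  choose pick hpick using hpick
  have hX : ¬ IsMeagre (range pick) := fun h => by
    obtain ⟨A, hAS, hsub⟩ := hcof _ h
    exact hpick ⟨A, hAS⟩ (hsub (mem_range_self _))
  exact (nonMeager_le_mk hX).trans mk_range_le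

def blockMax (e y : ℕ → ℕ) (n : ℕ) : ℕ := (Finset.range (e (n + 1))).sup y

lemma eventually_le_blockMax {e y g : ℕ → ℕ} (he : StrictMono e)
    (hsub : {x : ℕ → ℕ | ∀ k, x k ≤ (Finset.range (k + 1)).sup g} ⊆ avoidSet e y) :
    ∀ᶠ n in atTop, g n ≤ blockMax e y n := by
  filter_upwards [eventually_exists_lt_of_setOf_le_subset he hsub] with n ⟨k, hk₁, hk₂, hk⟩
  have hnk : n < k + 1 := Nat.lt_succ_of_le ((he.id_le n : n ≤ e n).trans hk₁)
  calc g n ≤ (Finset.range (k + 1)).sup g := Finset.le_sup (Finset.mem_range.2 hnk)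
    _ ≤ y k := hk.le
    _ ≤ blockMax e y n := Finset.le_sup (Finset.mem_range.2 hk₂)

lemma dNumber_le_cfMeager : dNumber ≤ cfMeager := by
  refine le_cfMeager fun S hS hcof => ?_
  choose e y he hAe using fun A : S => exists_subset_avoidSet_of_isMeagre (hS A A.2)
  refine (dNumber_le_mk (C := range fun A => blockMax (e A) (y A)) fun g => ?_).trans mk_range_le
  obtain ⟨A, hAS, hBA⟩ := hcof _ (isMeagre_setOf_forall_le fun k => (Finset.range (k + 1)).sup g)
  exact ⟨_, mem_range_self ⟨A, hAS⟩, eventually_le_blockMax (he _) (hBA.trans (hAe ⟨A, hAS⟩))⟩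

end MeagreIdeal

/-- Dual Miller–Truss/Fremlin: `cf(M) = max(d, non(M))`. -/
theorem stmt_15 : cfMeager = max dNumber nonMeager :=
  le_antisymm MeagreIdeal.cfMeager_le_max
    (max_le MeagreIdeal.dNumber_le_cfMeager MeagreIdeal.nonMeager_le_cfMeager)
end
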